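/- arXiv:2105.04525 — 9 statements merged into one kernel-verified Lean document; each statement's English description precedes it below -/
import Mathlib

section
/- For every integer r ≥ 2 there exists an integer matrix A with exactly binom(r+2,2) − 2 rows such that A has rank r (over ℚ), A is 2-modular, every row of A is nonzero, and every two distinct rows of A are linearly independent over ℚ. -/
/-- A row of an integer matrix, viewed as a vector over `ℚ`. -/
def rowQ {m n : ℕ} (A : Matrix (Fin m) (Fin n) ℤ) (i : Fin m) : Fin n → ℚ :=
  fun j => (A i j : ℚ)

/-- An integer matrix of rank `r` is `2`-modular if every `r × r` submatrix has
determinant of absolute value at most `2`. -/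
def IsTwoModular {m n : ℕ} (A : Matrix (Fin m) (Fin n) ℤ) (r : ℕ) : Prop :=
  ∀ (f : Fin r → Fin m) (g : Fin r → Fin n), |(A.submatrix f g).det| ≤ 2

/-!
The rows of the witness are `e_i`, `e_i - e_j` (`i < j`) and the "star" rows `e_0 + e_j`. The first
two kinds are rows of a transposed directed-graph incidence matrix, which is totally unimodular: a
row with at most one nonzero entry allows a Laplace expansion, and otherwise every row sums to `0`,
so the all-ones vector lies in the kernel. In a square submatrix, subtracting one star row from
another leaves an incidence row, and a single remaining star row `e_0 + e_b` splits the determinant,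
by linearity in that row, into two unimodular ones; hence every maximal minor is at most `2`.
The rows `e_i` give rank `r`, and since the first nonzero entry of every row is `1`, distinct rows
are never proportional.
-/

open Matrix Function

section Rows

variable {m n : Type*} [DecidableEq m] [DecidableEq n]

def indicatorVec : Option n → n → ℤ
  | none => 0
  | some a => Pi.single a 1

@[simp] lemma indicatorVec_none : indicatorVec (none : Option n) = 0 := rfl

@[simp] lemma indicatorVec_some (a : n) : indicatorVec (some a) = Pi.single a 1 := rfl

lemma indicatorVec_apply_eq_zero_or_one (o : Option n) (j : n) :
    indicatorVec o j = 0 ∨ indicatorVec o j = 1 := by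
  cases o with
  | none => simp
  | some a => by_cases h : j = a <;> simp [h]

lemma indicatorVec_comp {g : m → n} (hg : Injective g) (o : Option n) :
    indicatorVec o ∘ g = indicatorVec (o.bind (partialInv g)) := by
  cases o with
  | none => rfl
  | some a =>
    funext c
    rcases hpa : partialInv g a with _ | c'
    · have : g c ≠ a := fun h => by simp [← h, partialInv_left hg] at hpa
      simp [hpa, this]
    · obtain rfl : g c' = a := (hg.isPartialInv c' a).mp hpa
      simp [partialInv_left hg, Pi.single_apply, hg.eq_iff]

/-- Rows of the transposed incidence matrix of a directed graph whose arcs may miss an endpoint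
(`none`): at most one entry `1`, at most one entry `-1`, zeros elsewhere. -/
def IsIncidenceRow (v : n → ℤ) : Prop :=
  ∃ a b : Option n, v = indicatorVec a - indicatorVec b

lemma isIncidenceRow_indicatorVec (a : Option n) : IsIncidenceRow (indicatorVec a) :=
  ⟨a, none, by simp⟩

lemma IsIncidenceRow.comp {v : n → ℤ} (hv : IsIncidenceRow v) {g : m → n} (hg : Injective g) :
    IsIncidenceRow (v ∘ g) := by
  obtain ⟨a, b, rfl⟩ := hv
  exact ⟨_, _, by rw [Pi.sub_comp, indicatorVec_comp hg, indicatorVec_comp hg]⟩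

lemma IsIncidenceRow.abs_le_one {v : n → ℤ} (hv : IsIncidenceRow v) (j : n) : |v j| ≤ 1 := by
  obtain ⟨a, b, rfl⟩ := hv
  rcases indicatorVec_apply_eq_zero_or_one a j with ha | ha <;>
    rcases indicatorVec_apply_eq_zero_or_one b j with hb | hb <;> simp [ha, hb]

lemma IsIncidenceRow.sum_eq_zero_or_exists_single [Fintype n] [Nonempty n] {v : n → ℤ}
    (hv : IsIncidenceRow v) : ∑ j, v j = 0 ∨ ∃ c, ∀ j ≠ c, v j = 0 := by
  obtain ⟨a | a, b | b, rfl⟩ := hv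
  · exact .inl (by simp)
  · exact .inr ⟨b, fun j hj => by simp [hj]⟩
  · exact .inr ⟨a, fun j hj => by simp [hj]⟩
  · exact .inl (by simp [Finset.sum_sub_distrib])

def IsStarRow (z : Option n) (v : n → ℤ) : Prop :=
  ∃ b : Option n, v = indicatorVec z + indicatorVec b

lemma IsStarRow.comp {z : Option n} {v : n → ℤ} (hv : IsStarRow z v) {g : m → n}
    (hg : Injective g) : IsStarRow (z.bind (partialInv g)) (v ∘ g) := by
  obtain ⟨b, rfl⟩ := hv
  exact ⟨_, by rw [Pi.add_comp, indicatorVec_comp hg, indicatorVec_comp hg]⟩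

lemma IsStarRow.isIncidenceRow_sub {z : Option n} {v w : n → ℤ} (hv : IsStarRow z v)
    (hw : IsStarRow z w) : IsIncidenceRow (v - w) := by
  obtain ⟨b, rfl⟩ := hv
  obtain ⟨b', rfl⟩ := hw
  exact ⟨b, b', by abel⟩

end Rows

lemma det_succ_row_of_forall_ne_eq_zero {k : ℕ} (M : Matrix (Fin (k + 1)) (Fin (k + 1)) ℤ)
    {i c : Fin (k + 1)} (h : ∀ j ≠ c, M i j = 0) :
    M.det = (-1) ^ (i.val + c.val) * M i c * (M.submatrix i.succAbove c.succAbove).det := by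
  rw [det_succ_row M i, Finset.sum_eq_single c (fun j _ hj => by simp [h j hj]) (by simp)]

theorem abs_det_le_one_of_isIncidenceRow :
    ∀ {k : ℕ} (M : Matrix (Fin k) (Fin k) ℤ), (∀ i, IsIncidenceRow (M i)) → |M.det| ≤ 1
  | 0, M, _ => by simp
  | k + 1, M, hM => by
    by_cases h : ∃ i c, ∀ j ≠ c, M i j = 0
    · obtain ⟨i, c, hic⟩ := h
      have hminor : |(M.submatrix i.succAbove c.succAbove).det| ≤ 1 :=
        abs_det_le_one_of_isIncidenceRow _ fun _ => (hM _).comp Fin.succAbove_right_injective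
      rw [det_succ_row_of_forall_ne_eq_zero M hic, abs_mul, abs_mul, abs_pow, abs_neg, abs_one,
        one_pow, one_mul]
      exact mul_le_one₀ ((hM i).abs_le_one c) (abs_nonneg _) hminor
    · have hsum : M *ᵥ (fun _ => 1) = 0 := funext fun i => by
        simpa [mulVec, dotProduct] using
          (hM i).sum_eq_zero_or_exists_single.resolve_right fun hc => h ⟨i, hc⟩
      have hdet : M.det = 0 :=
        exists_mulVec_eq_zero_iff.mp ⟨_, fun h0 => one_ne_zero (congrFun h0 0), hsum⟩
      simp [hdet]

lemma abs_det_le_two_of_forall_mem_isStarRow {k : ℕ} (z : Option (Fin k)) (s : Finset (Fin k)) :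
    ∀ M : Matrix (Fin k) (Fin k) ℤ, (∀ i ∉ s, IsIncidenceRow (M i)) →
      (∀ i ∈ s, IsStarRow z (M i)) → |M.det| ≤ 2 := by
  induction s using Finset.induction_on with
  | empty =>
    intro M hM _
    exact (abs_det_le_one_of_isIncidenceRow M fun i => hM i (Finset.notMem_empty i)).trans
      one_le_two
  | insert a t hat ih =>
    intro M hinc hstar
    rcases t.eq_empty_or_nonempty with rfl | ⟨j, hj⟩
    · obtain ⟨b, hb⟩ := hstar a (Finset.mem_insert_self a ∅)
      have hrows (o : Option (Fin k)) (i) : IsIncidenceRow (M.updateRow a (indicatorVec o) i) := by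
        rcases eq_or_ne i a with rfl | hia
        · simpa using isIncidenceRow_indicatorVec o
        · simpa [hia] using hinc i (by simpa using hia)
      calc |M.det|
          = |(M.updateRow a (indicatorVec z)).det + (M.updateRow a (indicatorVec b)).det| := by
            rw [← det_updateRow_add, ← hb, updateRow_eq_self]
        _ ≤ 1 + 1 := (abs_add_le _ _).trans (add_le_add
            (abs_det_le_one_of_isIncidenceRow _ (hrows z))
            (abs_det_le_one_of_isIncidenceRow _ (hrows b)))
        _ = 2 := one_add_one_eq_two
    · have hja : a ≠ j := fun h => hat (h ▸ hj)
      rw [← det_updateRow_add_smul_self M hja (-1)]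
      refine ih _ (fun i hi => ?_) (fun i hi => ?_)
      · rcases eq_or_ne i a with rfl | hia
        · simpa [sub_eq_add_neg] using
            (hstar i (Finset.mem_insert_self i t)).isIncidenceRow_sub
              (hstar j (Finset.mem_insert_of_mem hj))
        · simpa [hia] using hinc i (by simp [hia, hi])
      · have hia : i ≠ a := fun h => hat (h ▸ hi)
        simpa [hia] using hstar i (Finset.mem_insert_of_mem hi)

theorem abs_det_le_two_of_isIncidenceRow_or_isStarRow {k : ℕ} (M : Matrix (Fin k) (Fin k) ℤ)
    (z : Option (Fin k)) (hM : ∀ i, IsIncidenceRow (M i) ∨ IsStarRow z (M i)) :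
    |M.det| ≤ 2 := by
  classical
  exact abs_det_le_two_of_forall_mem_isStarRow z {i | ¬ IsIncidenceRow (M i)} M
    (fun i hi => by simpa using hi) (fun i hi => (hM i).resolve_left (by simpa using hi))

theorem abs_det_submatrix_le_two {m n : Type*} [DecidableEq n] (A : Matrix m n ℤ) (z : Option n)
    (hA : ∀ i, IsIncidenceRow (A i) ∨ IsStarRow z (A i)) {k : ℕ} (f : Fin k → m)
    (g : Fin k → n) :
    |(A.submatrix f g).det| ≤ 2 := by
  by_cases hg : Injective g
  · exact abs_det_le_two_of_isIncidenceRow_or_isStarRow _ _ fun i =>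
      (hA (f i)).imp (·.comp hg) (·.comp hg)
  · obtain ⟨c, c', hgc, hcc'⟩ := not_injective_iff.mp hg
    have hdet : (A.submatrix f g).det = 0 := det_zero_of_column_eq hcc' fun i => by simp [hgc]
    simp [hdet]

section LeadingOne

variable {ι R : Type*} [LinearOrder ι]

def HasLeadingOne [Zero R] [One R] (v : ι → R) : Prop :=
  ∃ p, v p = 1 ∧ ∀ q < p, v q = 0

lemma HasLeadingOne.ne_zero [MulZeroOneClass R] [NeZero (1 : R)] {v : ι → R}
    (hv : HasLeadingOne v) : v ≠ 0 := by
  obtain ⟨p, hp, -⟩ := hv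
  exact fun h => one_ne_zero (hp.symm.trans (congrFun h p))

lemma HasLeadingOne.map {S : Type*} [Semiring R] [Semiring S] {v : ι → R} (hv : HasLeadingOne v)
    (f : R →+* S) : HasLeadingOne (f ∘ v) := by
  obtain ⟨p, hp, hq⟩ := hv
  exact ⟨p, by simp [hp], fun q hqp => by simp [hq q hqp]⟩

theorem linearIndependent_pair_of_hasLeadingOne [Field R] {v w : ι → R} (hv : HasLeadingOne v)
    (hw : HasLeadingOne w) (hvw : v ≠ w) : LinearIndependent R ![v, w] := by
  rw [LinearIndependent.pair_iff' hv.ne_zero]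
  rintro a rfl
  obtain ⟨p, hp, hbefore_p⟩ := hv
  obtain ⟨q, hq, hbefore_q⟩ := hw
  have hqp : ¬ q < p := fun h => by simp [hbefore_p q h] at hq
  have hpq : ¬ p < q := fun h => by
    have ha : a = 0 := by simpa [hp] using hbefore_q p h
    simp [ha] at hq
  obtain rfl : p = q := le_antisymm (not_lt.mp hqp) (not_lt.mp hpq)
  have ha : a = 1 := by simpa [hp] using hq
  simp [ha] at hvw

end LeadingOne

lemma rank_eq_card_width_of_submatrix_eq_one {m n K : Type*} [Fintype n] [DecidableEq n] [Field K]
    (A : Matrix m n K) (f : n → m) (hf : A.submatrix f id = 1) : A.rank = Fintype.card n :=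
  (rank_le_card_width A).antisymm (by simpa [hf] using rank_submatrix_le A f id)

lemma pi_single_one_injective {n : Type*} [DecidableEq n] :
    Injective fun a : n => (Pi.single a 1 : n → ℤ) :=
  fun a b h => by simpa [Pi.single_apply] using congrFun h a

section Witness

variable (k : ℕ)

abbrev WitnessIdx : Type := Fin (k + 1) ⊕ {p : Fin (k + 1) × Fin (k + 1) // p.1 < p.2} ⊕ Fin k

/-- The rows of `A_r = [I_r | D_r | B_r]` for `r = k + 1`, indexed from `0`: the column
`e_1 + e_{j+1}` of `B_r` becomes `e_0 + e_{j.succ}`. -/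
def witnessRow : WitnessIdx k → Fin (k + 1) → ℤ
  | .inl i => Pi.single i 1
  | .inr (.inl p) => Pi.single p.1.1 1 - Pi.single p.1.2 1
  | .inr (.inr j) => Pi.single 0 1 + Pi.single j.succ 1

lemma card_witnessIdx : Fintype.card (WitnessIdx k) = (k + 1 + 2).choose 2 - 2 := by
  simp only [Fintype.card_sum, Fintype.card_fin, Fintype.card_subtype,
    Fintype.card_product_filter_lt, Nat.choose_succ_succ, Nat.choose_one_right,
    Nat.choose_zero_right]
  omega

variable {k}

lemma witnessRow_isIncidenceRow_or_isStarRow (x : WitnessIdx k) :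
    IsIncidenceRow (witnessRow k x) ∨ IsStarRow (some 0) (witnessRow k x) := by
  rcases x with i | p | j
  · exact .inl (isIncidenceRow_indicatorVec (some i))
  · exact .inl ⟨some p.1.1, some p.1.2, rfl⟩
  · exact .inr ⟨some j.succ, rfl⟩

lemma hasLeadingOne_witnessRow (x : WitnessIdx k) : HasLeadingOne (witnessRow k x) := by
  rcases x with i | ⟨⟨i, i'⟩, hii'⟩ | j
  · exact ⟨i, by simp [witnessRow], fun q hq => by simp [witnessRow, hq.ne]⟩
  · exact ⟨i, by simp [witnessRow, hii'.ne],
      fun q hq => by simp [witnessRow, hq.ne, (hq.trans hii').ne]⟩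
  · exact ⟨0, by simp [witnessRow, (Fin.succ_ne_zero j).symm],
      fun q hq => absurd hq (Fin.not_lt_zero q)⟩

lemma sum_witnessRow (x : WitnessIdx k) :
    ∑ c, witnessRow k x c = Sum.elim (fun _ => 1) (Sum.elim (fun _ => 0) fun _ => 2) x := by
  rcases x with i | p | j <;> simp [witnessRow, Finset.sum_add_distrib, Finset.sum_sub_distrib]

lemma witnessRow_injective : Injective (witnessRow k) := by
  intro x y hxy
  have hsum := congrArg (fun v => ∑ c, v c) hxy
  simp only [sum_witnessRow] at hsum
  rcases x with i | ⟨⟨i, i'⟩, hii'⟩ | j <;>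
    rcases y with l | ⟨⟨l, l'⟩, hll'⟩ | j' <;>
    simp only [Sum.elim_inl, Sum.elim_inr] at hsum <;> norm_num at hsum
  · obtain rfl := pi_single_one_injective hxy
    rfl
  · have : (Pi.single i 1 + Pi.single l' 1 : Fin (k + 1) → ℤ) =
        Pi.single l 1 + Pi.single i' 1 := by
      simpa [witnessRow, sub_eq_sub_iff_add_eq_add] using hxy
    rw [Pi.single_add_single_eq_single_add_single one_ne_zero one_ne_zero] at this
    rcases this with ⟨rfl, rfl⟩ | ⟨-, rfl, -⟩ | ⟨h, -⟩
    · rfl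
    · exact absurd hii' (lt_irrefl _)
    · norm_num at h
  · obtain rfl := Fin.succ_injective _ (pi_single_one_injective (add_left_cancel hxy))
    rfl

end Witness

/-- For every `r ≥ 2` there is a rank-`r` `2`-modular integer matrix with exactly
`(r+2 choose 2) - 2` rows, all nonzero and pairwise non-parallel. -/
theorem statement1 (r : ℕ) (hr : 2 ≤ r) :
    ∃ (n : ℕ) (A : Matrix (Fin (Nat.choose (r + 2) 2 - 2)) (Fin n) ℤ),
      (A.map ((↑) : ℤ → ℚ)).rank = r ∧
      IsTwoModular A r ∧
      (∀ i, rowQ A i ≠ 0) ∧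
      (∀ i i', i ≠ i' → LinearIndependent ℚ ![rowQ A i, rowQ A i']) := by
  obtain ⟨k, rfl⟩ : ∃ k, r = k + 1 := ⟨r - 1, by omega⟩
  let e := Fintype.equivFinOfCardEq (card_witnessIdx k)
  let A : Matrix (Fin _) (Fin (k + 1)) ℤ := .of fun i => witnessRow k (e.symm i)
  have hrowQ (i) : rowQ A i = Int.castRingHom ℚ ∘ witnessRow k (e.symm i) := rfl
  have hleading (i) : HasLeadingOne (rowQ A i) := hrowQ i ▸ (hasLeadingOne_witnessRow _).map _
  refine ⟨k + 1, A, ?_, fun f g => ?_, fun i => (hleading i).ne_zero, fun i i' hii' => ?_⟩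
  · rw [rank_eq_card_width_of_submatrix_eq_one _ (e ∘ Sum.inl), Fintype.card_fin]
    ext i j
    simp [A, witnessRow, Pi.single_apply, one_apply, eq_comm]
  · exact abs_det_submatrix_le_two A (some 0)
      (fun _ => witnessRow_isIncidenceRow_or_isStarRow _) f g
  · refine linearIndependent_pair_of_hasLeadingOne (hleading i) (hleading i') ?_
    rw [hrowQ, hrowQ]
    exact (Int.cast_injective.comp_left).ne (witnessRow_injective.ne (e.symm.injective.ne hii'))
end

section
/- For each integer r ≥ 2, every r × r submatrix of the matrix A_r has determinant of absolute value at most 2 (i.e., A_r is 2-modular). -/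
/-- Index set for the columns of `D_r`: pairs `(i, j)` of rows with `i < j`.
There are `r.choose 2` such pairs. -/
abbrev PairIdx (r : ℕ) := {p : Fin r × Fin r // p.1 < p.2}

/-- The matrix `A_r = [I_r | D_r | B_r]`, where the columns of `D_r` are the vectors
`e_i - e_j` for `i < j`, and the `j`-th column of `B_r` is `e_1 + e_{j+1}`. -/
def Amat (r : ℕ) : Matrix (Fin r) (Fin r ⊕ PairIdx r ⊕ Fin (r - 1)) ℤ :=
  fun i j =>
    match j with
    | Sum.inl k => if i = k then 1 else 0
    | Sum.inr (Sum.inl p) => (if i = p.1.1 then 1 else 0) + (if i = p.1.2 then -1 else 0)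
    | Sum.inr (Sum.inr k) =>
        (if (i : ℕ) = 0 then 1 else 0) + (if (i : ℕ) = (k : ℕ) + 1 then 1 else 0)

/-!
Apart from the columns `e_1 + e_k` of `B_r`, every column of `A_r` is a network column `e_i` or
`e_i - e_j`, and square matrices built from network columns have determinant in `{-1, 0, 1}`
(Laplace expansion along a column with at most one nonzero entry; otherwise all column sums
vanish). In a square submatrix, subtracting one column `e_1 + e_{k₀}` from every other column
`e_1 + e_k` turns them into network columns `e_k - e_{k₀}` without changing the determinant, and
splitting the remaining column `e_1 + e_{k₀}` into `e_1` and `e_{k₀}` writes the determinant as a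
sum of two determinants of absolute value at most `1`.
-/

open Matrix

/-- The columns `0`, `±e_a` and `e_a - e_b` of a network matrix. -/
structure IsNetworkCol {ι : Type*} (v : ι → ℤ) : Prop where
  mem : ∀ i, v i = -1 ∨ v i = 0 ∨ v i = 1
  pos_unique : ∀ i j, v i = 1 → v j = 1 → i = j
  neg_unique : ∀ i j, v i = -1 → v j = -1 → i = j

namespace IsNetworkCol

variable {ι κ : Type*} {v : ι → ℤ}

lemma comp (hv : IsNetworkCol v) {ρ : κ → ι} (hρ : Function.Injective ρ) :
    IsNetworkCol (v ∘ ρ) :=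
  ⟨fun i => hv.mem (ρ i), fun _ _ hi hj => hρ (hv.pos_unique _ _ hi hj),
    fun _ _ hi hj => hρ (hv.neg_unique _ _ hi hj)⟩

lemma abs_le_one (hv : IsNetworkCol v) (i : ι) : |v i| ≤ 1 := by
  rcases hv.mem i with h | h | h <;> simp [h]

lemma sum_eq_zero [Fintype ι] (hv : IsNetworkCol v) {i j : ι} (hij : i ≠ j) (hi : v i ≠ 0)
    (hj : v j ≠ 0) : ∑ k, v k = 0 := by
  -- the two nonzero entries are `1` and `-1`, and a third one would repeat one of them
  have := hv.mem i
  have := hv.mem j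
  have := hv.pos_unique
  have := hv.neg_unique
  have h_opp : v i + v j = 0 := by grind
  rw [Fintype.sum_eq_add i j hij fun k hk => ?_, h_opp]
  have := hv.mem k
  grind

variable [DecidableEq ι]

lemma single (a : ι) : IsNetworkCol (Pi.single a 1 : ι → ℤ) :=
  ⟨fun i => by grind, fun i j => by grind, fun i j => by grind⟩

lemma single_sub_single (a b : ι) :
    IsNetworkCol (Pi.single a 1 - Pi.single b 1 : ι → ℤ) :=
  ⟨fun i => by grind [Pi.sub_apply], fun i j => by grind [Pi.sub_apply],
    fun i j => by grind [Pi.sub_apply]⟩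

end IsNetworkCol

theorem abs_det_le_one_of_isNetworkCol :
    ∀ {n : ℕ} (M : Matrix (Fin n) (Fin n) ℤ), (∀ c, IsNetworkCol (M · c)) → |M.det| ≤ 1
  | 0, M, _ => by simp
  | n + 1, M, hM => by
    by_cases h : ∃ c i, ∀ i' ≠ i, M i' c = 0
    · obtain ⟨c, i, hc⟩ := h
      have hminor : |(M.submatrix i.succAbove c.succAbove).det| ≤ 1 :=
        abs_det_le_one_of_isNetworkCol _ fun c' =>
          (hM (c.succAbove c')).comp Fin.succAbove_right_injective
      rw [det_succ_column M c, Fintype.sum_eq_single i fun i' hi' => by simp [hc i' hi'],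
        abs_mul, abs_mul, abs_pow, abs_neg, abs_one, one_pow, one_mul]
      exact mul_le_one₀ ((hM c).abs_le_one i) (abs_nonneg _) hminor
    · push Not at h
      -- every column has two nonzero entries, hence one `1` and one `-1`, and sums to zero
      have hsum : (fun _ => 1) ᵥ* M = 0 := by
        funext c
        obtain ⟨i₁, -, hi₁⟩ := h c 0
        obtain ⟨i₂, hi₂, hi₂'⟩ := h c i₁
        simpa [vecMul, dotProduct] using (hM c).sum_eq_zero hi₂ hi₂' hi₁
      rw [exists_vecMul_eq_zero_iff.mp ⟨_, one_ne_zero, hsum⟩]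
      simp

lemma isNetworkCol_updateCol {n : ℕ} {M : Matrix (Fin n) (Fin n) ℤ} {c₀ : Fin n}
    (hM : ∀ c ≠ c₀, IsNetworkCol (M · c)) {u : Fin n → ℤ} (hu : IsNetworkCol u) (c : Fin n) :
    IsNetworkCol (M.updateCol c₀ u · c) := by
  rcases eq_or_ne c c₀ with rfl | hc
  · simpa using hu
  · simpa [updateCol_ne hc] using hM c hc

theorem abs_det_le_two_of_col_eq_single_add_single {n : ℕ} {M : Matrix (Fin n) (Fin n) ℤ}
    {c₀ a b : Fin n} (hM : ∀ c ≠ c₀, IsNetworkCol (M · c))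
    (hc₀ : (M · c₀) = Pi.single a 1 + Pi.single b 1) : |M.det| ≤ 2 := by
  have hsplit : M.det = (M.updateCol c₀ (Pi.single a 1)).det +
      (M.updateCol c₀ (Pi.single b 1)).det := by
    rw [← det_updateCol_add, ← hc₀, updateCol_eq_self]
  have ha := abs_det_le_one_of_isNetworkCol _ (isNetworkCol_updateCol hM (.single a))
  have hb := abs_det_le_one_of_isNetworkCol _ (isNetworkCol_updateCol hM (.single b))
  calc |M.det| ≤ _ + _ := hsplit ▸ abs_add_le _ _
    _ ≤ 2 := by omega

theorem abs_det_le_two_of_isNetworkCol_or_eq_single_add_single {n : ℕ}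
    (M : Matrix (Fin n) (Fin n) ℤ) (z : Fin n)
    (hM : ∀ c, IsNetworkCol (M · c) ∨ ∃ k, (M · c) = Pi.single z 1 + Pi.single k 1) :
    |M.det| ≤ 2 := by
  classical
  by_cases hnet : ∀ c, IsNetworkCol (M · c)
  · linarith [abs_det_le_one_of_isNetworkCol M hnet]
  push Not at hnet
  obtain ⟨c₀, hc₀⟩ := hnet
  obtain ⟨k₀, hk₀⟩ := (hM c₀).resolve_left hc₀
  set d : Fin n → ℤ := fun c => if c ≠ c₀ ∧ ¬IsNetworkCol (M · c) then -1 else 0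
  set M' : Matrix (Fin n) (Fin n) ℤ := of fun i c => M i c + d c * M i c₀
  have hdet : M'.det = M.det := by
    rw [← det_transpose, ← det_transpose M]
    exact det_eq_of_forall_row_eq_smul_add_const d c₀ (by simp [d]) fun _ _ => rfl
  have hcol : ∀ c ≠ c₀, IsNetworkCol (M' · c) := by
    intro c hc
    by_cases hcn : IsNetworkCol (M · c)
    · simp [M', d, hcn]
    · obtain ⟨k, hk⟩ := (hM c).resolve_left hcn
      convert IsNetworkCol.single_sub_single k k₀ using 1
      funext i
      simp [M', d, hc, hcn, congr_fun hk i, congr_fun hk₀ i]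
      ring
  have hcol₀ : (M' · c₀) = Pi.single z 1 + Pi.single k₀ 1 := by
    simp [M', d, hk₀]
  exact hdet ▸ abs_det_le_two_of_col_eq_single_add_single hcol hcol₀

lemma Amat_col_isNetworkCol_or_eq_single_add_single (r : ℕ)
    (j : Fin (r + 1) ⊕ PairIdx (r + 1) ⊕ Fin r) :
    IsNetworkCol (Amat (r + 1) · j) ∨ ∃ k, (Amat (r + 1) · j) = Pi.single 0 1 + Pi.single k 1 := by
  rcases j with k | p | k
  · left
    convert IsNetworkCol.single k using 1
    funext i
    simp [Amat, Pi.single_apply]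
  · left
    convert IsNetworkCol.single_sub_single p.1.1 p.1.2 using 1
    funext i
    simp only [Amat, Pi.sub_apply, Pi.single_apply]
    split_ifs <;> norm_num
  · right
    refine ⟨k.succ, funext fun i => ?_⟩
    simp only [Amat, Pi.add_apply, Pi.single_apply, Fin.ext_iff, Fin.val_zero, Fin.val_succ]

theorem statement2_general (r : ℕ)
    (f : Fin r → Fin r) (g : Fin r → (Fin r ⊕ PairIdx r ⊕ Fin (r - 1))) :
    |((Amat r).submatrix f g).det| ≤ 2 := by
  by_cases hf : f.Injective
  · let e := Equiv.ofBijective f hf.bijective_of_finite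
    have hperm : (Amat r).submatrix f g = ((Amat r).submatrix id g).submatrix e (Equiv.refl _) :=
      rfl
    rw [hperm, abs_det_submatrix_equiv_equiv]
    obtain _ | r := r
    · simp
    exact abs_det_le_two_of_isNetworkCol_or_eq_single_add_single _ 0 fun c =>
      Amat_col_isNetworkCol_or_eq_single_add_single r (g c)
  · obtain ⟨a, b, hab, hne⟩ := Function.not_injective_iff.mp hf
    rw [det_zero_of_row_eq hne (by ext; simp only [submatrix_apply, hab])]
    simp

/-- Every `r × r` submatrix of `A_r` has determinant of absolute value at most `2`,
i.e. `A_r` is `2`-modular. -/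
theorem statement2 (r : ℕ) (hr : 2 ≤ r)
    (f : Fin r → Fin r) (g : Fin r → (Fin r ⊕ PairIdx r ⊕ Fin (r - 1))) :
    |((Amat r).submatrix f g).det| ≤ 2 :=
  statement2_general r f g
end

section
/- For each integer r ≥ 2, every r × r submatrix of the matrix A'_r has determinant of absolute value at most 2 (i.e., A'_r is 2-modular). -/
/-- The matrix `A'_r = [I_r | D_r | C_r | w]`, where the columns of `D_r` are the vectors
`e_i - e_j` for `i < j`, the `j`-th column of `C_r` is `e_1 + e_2 - e_{j+2}`, and
`w = e_1 + e_2`. -/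
def A'mat (r : ℕ) : Matrix (Fin r) (Fin r ⊕ PairIdx r ⊕ Fin (r - 2) ⊕ Unit) ℤ :=
  fun i j =>
    match j with
    | Sum.inl k => if i = k then 1 else 0
    | Sum.inr (Sum.inl p) => (if i = p.1.1 then 1 else 0) + (if i = p.1.2 then -1 else 0)
    | Sum.inr (Sum.inr (Sum.inl k)) =>
        (if (i : ℕ) = 0 then 1 else 0) + (if (i : ℕ) = 1 then 1 else 0)
          - (if (i : ℕ) = (k : ℕ) + 2 then 1 else 0)
    | Sum.inr (Sum.inr (Sum.inr _)) =>
        (if (i : ℕ) = 0 then 1 else 0) + (if (i : ℕ) = 1 then 1 else 0)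

open Matrix

section

variable {R : Type*} [CommRing R] {ι κ : Type*} [DecidableEq ι] [DecidableEq κ]

def IsSingleOrZero (v : ι → R) : Prop := v = 0 ∨ ∃ i, v = Pi.single i 1

/-- A column of the signed incidence matrix of a directed graph, where an edge may also have only
a head, only a tail, or neither. -/
def IsIncidenceVec (v : ι → R) : Prop :=
  ∃ a b : ι → R, IsSingleOrZero a ∧ IsSingleOrZero b ∧ v = a - b

theorem isSingleOrZero_ite {p : ι → Prop} [DecidablePred p]
    (hp : ∀ i j, p i → p j → i = j) :
    IsSingleOrZero (fun i => if p i then (1 : R) else 0) := by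
  by_cases h : ∃ i, p i
  · obtain ⟨i, hi⟩ := h
    refine Or.inr ⟨i, funext fun j => ?_⟩
    by_cases hj : p j
    · obtain rfl := hp j i hj hi
      simp [hj]
    · simp [hj, show j ≠ i from fun h => hj (h ▸ hi)]
  · push Not at h
    exact Or.inl (funext fun j => by simp [h j])

theorem IsSingleOrZero.comp {v : ι → R} (hv : IsSingleOrZero v) {f : κ → ι}
    (hf : Function.Injective f) : IsSingleOrZero (v ∘ f) := by
  rcases hv with rfl | ⟨i, rfl⟩
  · exact Or.inl rfl
  · simpa only [Function.comp_def, Pi.single_apply] using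
      isSingleOrZero_ite (p := fun k => f k = i) fun k l hk hl => hf (hk.trans hl.symm)

theorem IsSingleOrZero.isIncidenceVec {v : ι → R} (hv : IsSingleOrZero v) : IsIncidenceVec v :=
  ⟨v, 0, hv, Or.inl rfl, (sub_zero v).symm⟩

theorem IsIncidenceVec.comp {v : ι → R} (hv : IsIncidenceVec v) {f : κ → ι}
    (hf : Function.Injective f) : IsIncidenceVec (v ∘ f) := by
  obtain ⟨a, b, ha, hb, rfl⟩ := hv
  exact ⟨a ∘ f, b ∘ f, ha.comp hf, hb.comp hf, rfl⟩

theorem isIncidenceVec_updateRow {M : Matrix ι ι R} {j i : ι} {v : ι → R}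
    (hv : IsIncidenceVec v) (hMi : i ≠ j → IsIncidenceVec (M i)) :
    IsIncidenceVec (M.updateRow j v i) := by
  rcases eq_or_ne i j with rfl | hij
  · rwa [updateRow_self]
  · rw [updateRow_ne hij]
    exact hMi hij

theorem det_eq_zero_of_forall_row_eq_single_sub_single [IsDomain R] [Fintype ι] [Nonempty ι]
    {M : Matrix ι ι R} (hM : ∀ i, ∃ k l, M i = Pi.single k 1 - Pi.single l 1) :
    M.det = 0 := by
  refine exists_mulVec_eq_zero_iff.mp ⟨1, one_ne_zero, funext fun i => ?_⟩
  obtain ⟨k, l, hkl⟩ := hM i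
  simp [mulVec, dotProduct, hkl, Finset.sum_sub_distrib]

theorem det_succ_row_of_eq_single {n : ℕ} {M : Matrix (Fin (n + 1)) (Fin (n + 1)) R}
    {i k : Fin (n + 1)} {c : R} (hi : M i = Pi.single k c) :
    M.det = (-1) ^ (i + k : ℕ) * c * (M.submatrix i.succAbove k.succAbove).det := by
  rw [det_succ_row M i, Finset.sum_eq_single k]
  · simp [hi]
  · intro j _ hj
    simp [hi, hj]
  · simp

variable [LinearOrder R] [IsStrictOrderedRing R]

theorem abs_det_le_one_of_isIncidenceVec :
    ∀ {n : ℕ} (M : Matrix (Fin n) (Fin n) R), (∀ i, IsIncidenceVec (M i)) → |M.det| ≤ 1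
  | 0, M, _ => by simp
  | n + 1, M, hM => by
    by_cases hedges : ∀ i, ∃ k l, M i = Pi.single k 1 - Pi.single l 1
    · simp [det_eq_zero_of_forall_row_eq_single_sub_single hedges]
    push Not at hedges
    obtain ⟨i, hi⟩ := hedges
    obtain ⟨k, c, hc, hik⟩ : ∃ k c, |c| ≤ (1 : R) ∧ M i = Pi.single k c := by
      obtain ⟨a, b, ha | ⟨k, rfl⟩, hb | ⟨l, rfl⟩, hab⟩ := hM i
      · exact ⟨0, 0, by simp, by simp [hab, ha, hb]⟩
      · exact ⟨l, -1, by simp, by simp [hab, ha, Pi.single_neg]⟩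
      · exact ⟨k, 1, by simp, by simp [hab, hb]⟩
      · exact absurd hab (hi k l)
    have hminor := abs_det_le_one_of_isIncidenceVec (M.submatrix i.succAbove k.succAbove)
      fun j => (hM (i.succAbove j)).comp Fin.succAbove_right_injective
    rw [det_succ_row_of_eq_single hik, abs_mul, abs_mul, abs_pow, abs_neg, abs_one, one_pow,
      one_mul]
    exact mul_le_one₀ hc (abs_nonneg _) hminor

end

section

variable {R : Type*} [CommRing R] [LinearOrder R] [IsStrictOrderedRing R] {n : ℕ}
  {u w : Fin n → R}

theorem abs_det_le_two_of_row_eq_add_sub (hu : IsSingleOrZero u) (hw : IsSingleOrZero w)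
    {M : Matrix (Fin n) (Fin n) R} {j : Fin n} {v : Fin n → R} (hv : IsSingleOrZero v)
    (hMj : M j = u + w - v) (hM : ∀ i ≠ j, IsIncidenceVec (M i)) : |M.det| ≤ 2 := by
  have hsplit : M.det = (M.updateRow j (u - v)).det + (M.updateRow j w).det := by
    rw [← det_updateRow_add, show u - v + w = M j by rw [hMj]; abel, updateRow_eq_self]
  have h₁ := abs_det_le_one_of_isIncidenceVec _ fun i =>
    isIncidenceVec_updateRow ⟨u, v, hu, hv, rfl⟩ (hM i)
  have h₂ := abs_det_le_one_of_isIncidenceVec _ fun i =>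
    isIncidenceVec_updateRow hw.isIncidenceVec (hM i)
  rw [hsplit]
  linarith [abs_add_le (M.updateRow j (u - v)).det (M.updateRow j w).det]

theorem abs_det_le_two_of_rows_notMem_isIncidenceVec (hu : IsSingleOrZero u)
    (hw : IsSingleOrZero w) (S : Finset (Fin n)) {M : Matrix (Fin n) (Fin n) R}
    (hM : ∀ i ∉ S, IsIncidenceVec (M i))
    (hS : ∀ i ∈ S, ∃ v, IsSingleOrZero v ∧ M i = u + w - v) : |M.det| ≤ 2 := by
  induction S using Finset.induction_on generalizing M with
  | empty =>
    exact (abs_det_le_one_of_isIncidenceVec M fun i => hM i (Finset.notMem_empty i)).trans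
      one_le_two
  | insert j S hjS ih =>
    obtain ⟨v, hv, hMj⟩ := hS j (Finset.mem_insert_self j S)
    rcases S.eq_empty_or_nonempty with rfl | ⟨j', hj'⟩
    · exact abs_det_le_two_of_row_eq_add_sub hu hw hv hMj fun i hi => hM i (by simpa using hi)
    obtain ⟨v', hv', hMj'⟩ := hS j' (Finset.mem_insert_of_mem hj')
    have hjj' : j ≠ j' := (ne_of_mem_of_not_mem hj' hjS).symm
    rw [← det_updateRow_add_smul_self M hjj' (-1)]
    refine ih (fun i hi => isIncidenceVec_updateRow ⟨v', v, hv', hv, ?_⟩ fun hij => ?_)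
      fun i hi => ?_
    · rw [hMj, hMj', neg_one_smul]
      abel
    · exact hM i (by simp [hij, hi])
    · rw [updateRow_ne (ne_of_mem_of_not_mem hi hjS)]
      exact hS i (Finset.mem_insert_of_mem hi)

theorem abs_det_le_two_of_isIncidenceVec_or (hu : IsSingleOrZero u) (hw : IsSingleOrZero w)
    {M : Matrix (Fin n) (Fin n) R}
    (hM : ∀ i, IsIncidenceVec (M i) ∨ ∃ v, IsSingleOrZero v ∧ M i = u + w - v) :
    |M.det| ≤ 2 := by
  classical
  refine abs_det_le_two_of_rows_notMem_isIncidenceVec hu hw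
    (Finset.univ.filter fun i => ¬IsIncidenceVec (M i)) (fun i hi => ?_) fun i hi => ?_
  · simpa using hi
  · exact (hM i).resolve_left (Finset.mem_filter.mp hi).2

end

theorem isSingleOrZero_ite_val_eq {r : ℕ} {f : Fin r → Fin r} (hf : Function.Injective f)
    (m : ℕ) : IsSingleOrZero fun i => if (f i : ℕ) = m then (1 : ℤ) else 0 :=
  (isSingleOrZero_ite (p := fun a : Fin r => (a : ℕ) = m)
    fun _ _ ha hb => Fin.ext (ha.trans hb.symm)).comp hf

theorem isIncidenceVec_or_eq_A'mat_col {r : ℕ} {f : Fin r → Fin r} (hf : Function.Injective f)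
    (c : Fin r ⊕ PairIdx r ⊕ Fin (r - 2) ⊕ Unit) :
    IsIncidenceVec (fun i => A'mat r (f i) c) ∨
      ∃ v, IsSingleOrZero v ∧ (fun i => A'mat r (f i) c) =
        (fun i => if (f i : ℕ) = 0 then 1 else 0) + (fun i => if (f i : ℕ) = 1 then 1 else 0) -
          v := by
  have hrow : ∀ k : Fin r, IsSingleOrZero fun i => if f i = k then (1 : ℤ) else 0 := fun k =>
    (isSingleOrZero_ite (p := (· = k)) fun _ _ ha hb => ha.trans hb.symm).comp hf
  rcases c with k | p | k | _
  · exact Or.inl (hrow k).isIncidenceVec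
  · refine Or.inl ⟨_, _, hrow p.1.1, hrow p.1.2, funext fun i => ?_⟩
    simp only [A'mat, Pi.sub_apply]
    split_ifs <;> simp
  · exact Or.inr ⟨_, isSingleOrZero_ite_val_eq hf (k + 2), funext fun i => rfl⟩
  · exact Or.inr ⟨0, Or.inl rfl, funext fun i => (sub_zero _).symm⟩

theorem statement3_general (r : ℕ)
    (f : Fin r → Fin r) (g : Fin r → (Fin r ⊕ PairIdx r ⊕ Fin (r - 2) ⊕ Unit)) :
    |((A'mat r).submatrix f g).det| ≤ 2 := by
  by_cases hf : Function.Injective f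
  · rw [← det_transpose]
    exact abs_det_le_two_of_isIncidenceVec_or (isSingleOrZero_ite_val_eq hf 0)
      (isSingleOrZero_ite_val_eq hf 1) fun j => isIncidenceVec_or_eq_A'mat_col hf (g j)
  · obtain ⟨a, b, hab, hne⟩ := Function.not_injective_iff.mp hf
    rw [det_zero_of_row_eq hne (funext fun j => by simp [hab]), abs_zero]
    exact zero_le_two

/-- Every `r × r` submatrix of `A'_r` has determinant of absolute value at most `2`,
i.e. `A'_r` is `2`-modular. -/
theorem statement3 (r : ℕ) (hr : 2 ≤ r)
    (f : Fin r → Fin r) (g : Fin r → (Fin r ⊕ PairIdx r ⊕ Fin (r - 2) ⊕ Unit)) :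
    |((A'mat r).submatrix f g).det| ≤ 2 :=
  statement3_general r f g
end

section
/- For each integer r ≥ 3, every r × r submatrix of the matrix H_r = [I_r | D_r | v] has determinant of absolute value at most 2 (i.e., H_r is 2-modular). -/
/-- The matrix `H_r = [I_r | D_r | v]`, where the columns of `D_r` are the vectors
`e_i - e_j` for `i < j`, and `v = e_1 - e_2 - e_3`. -/
def Hmat (r : ℕ) : Matrix (Fin r) (Fin r ⊕ PairIdx r ⊕ Unit) ℤ :=
  fun i j =>
    match j with
    | Sum.inl k => if i = k then 1 else 0
    | Sum.inr (Sum.inl p) => (if i = p.1.1 then 1 else 0) + (if i = p.1.2 then -1 else 0)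
    | Sum.inr (Sum.inr _) =>
        (if (i : ℕ) = 0 then 1 else 0) - (if (i : ℕ) = 1 then 1 else 0)
          - (if (i : ℕ) = 2 then 1 else 0)

/-!
`D_r` is the node–arc incidence matrix of a directed graph, hence totally unimodular, and so is
`[I_r | D_r]`. The extra column `v = (e₁ - e₂) - e₃` is the difference of two columns of
`[I_r | D_r]`. A square submatrix using `v` twice is singular; one using it once has, by linearity
of the determinant in that column, determinant equal to a difference of two minors of a totally
unimodular matrix, hence of absolute value at most `2`.
-/

open Matrix Function

theorem Matrix.det_updateCol_sub {n R : Type*} [Fintype n] [DecidableEq n] [CommRing R]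
    (M : Matrix n n R) (j : n) (u v : n → R) :
    (M.updateCol j (u - v)).det = (M.updateCol j u).det - (M.updateCol j v).det := by
  rw [sub_eq_add_neg, ← neg_one_smul R v, det_updateCol_add, det_updateCol_smul]
  ring

theorem Matrix.det_mem_range_signType_of_col_eq_single {R : Type*} [CommRing R] {k : ℕ}
    (M : Matrix (Fin (k + 1)) (Fin (k + 1)) R) (x i₀ : Fin (k + 1)) (c : SignType)
    (hcol : ∀ i, M i x = if i = i₀ then (c : R) else 0)
    (hminor : (M.submatrix i₀.succAbove x.succAbove).det ∈ Set.range SignType.cast) :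
    M.det ∈ Set.range SignType.cast := by
  rw [det_succ_column M x, Fintype.sum_eq_single i₀ fun i hi => by simp [hcol, hi], hcol,
    if_pos rfl]
  change _ ∈ MonoidHom.mrange SignType.castHom.toMonoidHom
  refine mul_mem (mul_mem (pow_mem ?_ _) ⟨c, rfl⟩) hminor
  exact ⟨-1, by simp⟩

theorem Matrix.IsTotallyUnimodular.abs_det_submatrix_le_one {m n : Type*}
    {A : Matrix m n ℤ} (hA : A.IsTotallyUnimodular) {k : ℕ} (f : Fin k → m) (g : Fin k → n) :
    |(A.submatrix f g).det| ≤ 1 := by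
  obtain ⟨s, hs⟩ := (isTotallyUnimodular_iff A).mp hA k f g
  rw [← hs]
  cases s <;> simp

def incidenceMatrix {m n : Type*} [DecidableEq m] (R : Type*) [Ring R] (s t : n → m) :
    Matrix m n R :=
  Matrix.of fun i j => (if i = s j then 1 else 0) - (if i = t j then 1 else 0)

/- If every column of a square submatrix has both endpoints among its rows, its rows sum to zero;
otherwise some column has at most one nonzero entry, and we expand along it. -/
theorem incidenceMatrix_isTotallyUnimodular {m n : Type*} [DecidableEq m] (R : Type*)
    [CommRing R] (s t : n → m) : (incidenceMatrix R s t).IsTotallyUnimodular := by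
  intro k
  induction k with
  | zero => intro f g _ _; exact ⟨1, by simp⟩
  | succ k ih =>
    intro f g hf hg
    set S := (incidenceMatrix R s t).submatrix f g
    have hS : ∀ i x, S i x = (if f i = s (g x) then 1 else 0) - (if f i = t (g x) then 1 else 0) :=
      fun _ _ => rfl
    by_cases hboth : ∀ x, s (g x) ∈ Set.range f ∧ t (g x) ∈ Set.range f
    · have hsum : ∀ x, ∑ i, S i x = 0 := by
        intro x
        obtain ⟨⟨i₁, hi₁⟩, ⟨i₂, hi₂⟩⟩ := hboth x
        simp [hS, ← hi₁, ← hi₂, hf.eq_iff, Finset.sum_sub_distrib]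
      refine ⟨0, ?_⟩
      rw [det_eq_sum_column_mul_submatrix_succAbove_succAbove_det S 0 0 fun x _ => hsum x,
        hsum, SignType.coe_zero, mul_zero, zero_mul]
    obtain ⟨x, hx⟩ := not_forall.mp hboth
    obtain ⟨i₀, c, hcol⟩ : ∃ (i₀ : Fin (k + 1)) (c : SignType),
        ∀ i, S i x = if i = i₀ then (c : R) else 0 := by
      rw [not_and_or] at hx
      by_cases hs : s (g x) ∈ Set.range f
      · obtain ⟨i₀, hi₀⟩ := hs
        have ht : ∀ i, f i ≠ t (g x) := fun i h => (hx.resolve_left (not_not.mpr ⟨i₀, hi₀⟩)) ⟨i, h⟩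
        exact ⟨i₀, 1, fun i => by simp [hS, ← hi₀, hf.eq_iff, ht]⟩
      have hs' : ∀ i, f i ≠ s (g x) := fun i h => hs ⟨i, h⟩
      by_cases ht : t (g x) ∈ Set.range f
      · obtain ⟨i₀, hi₀⟩ := ht
        exact ⟨i₀, -1, fun i => by by_cases hi : i = i₀ <;> simp [hS, hi, ← hi₀, hf.eq_iff, hs']⟩
      · have ht' : ∀ i, f i ≠ t (g x) := fun i h => ht ⟨i, h⟩
        exact ⟨0, 0, fun i => by simp [hS, hs', ht']⟩
    exact det_mem_range_signType_of_col_eq_single S x i₀ c hcol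
      (ih _ _ (hf.comp Fin.succAbove_right_injective) (hg.comp Fin.succAbove_right_injective))

theorem Matrix.IsTotallyUnimodular.abs_det_submatrix_fromCols_sub_le_two {m n : Type*}
    {A : Matrix m n ℤ} (hA : A.IsTotallyUnimodular) (a b : n) {k : ℕ}
    (f : Fin k → m) (g : Fin k → n ⊕ Unit) :
    |((A.fromCols (replicateCol Unit fun i => A i a - A i b)).submatrix f g).det| ≤ 2 := by
  set S := (A.fromCols (replicateCol Unit fun i => A i a - A i b)).submatrix f g
  set g' : Fin k → n := fun y => (g y).elim id fun _ => a
  by_cases hv : ∃ x, g x = Sum.inr ()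
  · obtain ⟨x, hx⟩ := hv
    by_cases hv' : ∃ y, y ≠ x ∧ g y = Sum.inr ()
    · obtain ⟨y, hyx, hy⟩ := hv'
      rw [det_zero_of_column_eq hyx fun i => by simp [S, hx, hy]]
      norm_num
    push Not at hv'
    have hupdate : ∀ c, S.updateCol x (fun i => A (f i) c) = A.submatrix f (update g' x c) := by
      intro c
      ext i y
      by_cases hyx : y = x
      · simp [hyx]
      · obtain ⟨j, hj⟩ : ∃ j, g y = Sum.inl j := by
          rcases hgy : g y with j | ⟨⟩
          exacts [⟨j, rfl⟩, absurd hgy (hv' y hyx)]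
        simp [S, g', hyx, hj]
    have hS : S = S.updateCol x ((fun i => A (f i) a) - fun i => A (f i) b) := by
      conv_lhs => rw [← updateCol_eq_self S x]
      congr 1
      ext i
      simp [S, hx]
    rw [hS, det_updateCol_sub, hupdate, hupdate]
    calc _ ≤ |(A.submatrix f (update g' x a)).det| + |(A.submatrix f (update g' x b)).det| :=
          abs_sub _ _
      _ ≤ 1 + 1 := add_le_add (hA.abs_det_submatrix_le_one _ _) (hA.abs_det_submatrix_le_one _ _)
      _ = 2 := by norm_num
  · push Not at hv
    have hS : S = A.submatrix f g' := by
      ext i y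
      obtain ⟨j, hj⟩ : ∃ j, g y = Sum.inl j := by
        rcases hgy : g y with j | ⟨⟩
        exacts [⟨j, rfl⟩, absurd hgy (hv y)]
      simp [S, g', hj]
    rw [hS]
    linarith [hA.abs_det_submatrix_le_one f g']

/-- `[I_r | D_r]`. -/
def identityIncidence (r : ℕ) : Matrix (Fin r) (Fin r ⊕ PairIdx r) ℤ :=
  fromCols 1 (incidenceMatrix ℤ (fun p : PairIdx r => p.1.1) fun p => p.1.2)

theorem identityIncidence_isTotallyUnimodular (r : ℕ) :
    (identityIncidence r).IsTotallyUnimodular :=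
  (incidenceMatrix_isTotallyUnimodular ℤ _ _).one_fromCols

theorem Hmat_eq_submatrix_fromCols (r : ℕ) (hr : 3 ≤ r) :
    let A := identityIncidence r
    let a : Fin r ⊕ PairIdx r := Sum.inr ⟨(⟨0, by omega⟩, ⟨1, by omega⟩), by simp [Fin.lt_def]⟩
    let b : Fin r ⊕ PairIdx r := Sum.inl ⟨2, by omega⟩
    Hmat r = (A.fromCols (replicateCol Unit fun i => A i a - A i b)).submatrix id
      (Equiv.sumAssoc _ _ _).symm := by
  ext i (k | p | u)
  · simp [Hmat, identityIncidence, one_apply]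
  · simp [Hmat, identityIncidence, incidenceMatrix, sub_eq_add_neg, apply_ite Neg.neg]
  · simp [Hmat, identityIncidence, incidenceMatrix, one_apply, Fin.ext_iff]

/-- Every `r × r` submatrix of `H_r` has determinant of absolute value at most `2`,
i.e. `H_r` is `2`-modular. -/
theorem statement4 (r : ℕ) (hr : 3 ≤ r)
    (f : Fin r → Fin r) (g : Fin r → (Fin r ⊕ PairIdx r ⊕ Unit)) :
    |((Hmat r).submatrix f g).det| ≤ 2 := by
  rw [Hmat_eq_submatrix_fromCols r hr, submatrix_submatrix]
  exact (identityIncidence_isTotallyUnimodular r).abs_det_submatrix_fromCols_sub_le_two _ _ f _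
end

section
/- For each integer r ≥ 3 and every set S of column indices of the matrix H_r, the columns of H_r indexed by S are linearly independent over ℚ if and only if their entrywise reductions modulo 3 are linearly independent over the field ℤ/3ℤ. (Equivalently, the vector matroids of H_r over ℝ and over GF(3) coincide.) -/
/-!
The columns `e_i` and `e_i - e_j` of `[I_r | D_r]` are arcs of a directed graph (an arc may lack
its head), so this matrix stays totally unimodular when the column `v` is appended in the form
`e_1 - e_2` or `-e_3`. As `v = (e_1 - e_2) + (-e_3)`, multilinearity of the determinant in that
column makes every square minor of `H_r` a sum of two elements of `{0, ±1}`: an integer in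
`[-2, 2]`, which vanishes if and only if it vanishes modulo `3`. Over a field, columns are linearly
independent if and only if some maximal minor is nonzero, so independence over `ℚ` and over
`ZMod 3` agree.
-/

open Matrix

variable {R : Type*} [CommRing R] {m m' n ι : Type*}

/-- `w` is `e a - e b`, `e a`, `-e b` or `0`: a column of the incidence matrix of a directed
graph whose arcs may lack a head or a tail. -/
structure IsArcVector (w : m → R) : Prop where
  mem_range_signType_cast : ∀ i, w i ∈ Set.range SignType.cast
  eq_of_eq_one : ∀ i i', w i = 1 → w i' = 1 → i = i'
  eq_of_eq_neg_one : ∀ i i', w i = -1 → w i' = -1 → i = i'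

namespace IsArcVector

lemma comp {w : m → R} (hw : IsArcVector w) {f : m' → m} (hf : f.Injective) :
    IsArcVector (w ∘ f) where
  mem_range_signType_cast i := hw.mem_range_signType_cast (f i)
  eq_of_eq_one _ _ h h' := hf (hw.eq_of_eq_one _ _ h h')
  eq_of_eq_neg_one _ _ h h' := hf (hw.eq_of_eq_neg_one _ _ h h')

lemma eq_one_or_eq_neg_one {w : m → R} (hw : IsArcVector w) {i : m} (hi : w i ≠ 0) :
    w i = 1 ∨ w i = -1 := by
  obtain ⟨s, hs⟩ := hw.mem_range_signType_cast i
  cases s <;> simp_all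

lemma sum_eq_zero [Fintype m] {w : m → R} (hw : IsArcVector w) {i₁ i₂ : m} (hne : i₁ ≠ i₂)
    (h₁ : w i₁ ≠ 0) (h₂ : w i₂ ≠ 0) : ∑ i, w i = 0 := by
  have one := hw.eq_of_eq_one
  have neg_one := hw.eq_of_eq_neg_one
  rw [Fintype.sum_eq_add i₁ i₂ hne]
  · rcases hw.eq_one_or_eq_neg_one h₁ with h₁ | h₁ <;>
      rcases hw.eq_one_or_eq_neg_one h₂ with h₂ | h₂ <;> grind
  · rintro i ⟨hi₁, hi₂⟩
    by_contra hi
    rcases hw.eq_one_or_eq_neg_one h₁ with h₁ | h₁ <;>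
      rcases hw.eq_one_or_eq_neg_one h₂ with h₂ | h₂ <;>
      rcases hw.eq_one_or_eq_neg_one hi with h | h <;> grind

end IsArcVector

lemma isArcVector_ite_sub_ite {P Q : m → Prop} [DecidablePred P] [DecidablePred Q]
    (hP : ∀ i i', P i → P i' → i = i') (hQ : ∀ i i', Q i → Q i' → i = i') :
    IsArcVector (fun i => (if P i then 1 else 0) - (if Q i then 1 else 0) : m → ℤ) where
  mem_range_signType_cast i := by
    split_ifs
    exacts [⟨0, rfl⟩, ⟨1, rfl⟩, ⟨-1, rfl⟩, ⟨0, rfl⟩]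
  eq_of_eq_one i i' := by
    split_ifs <;> grind
  eq_of_eq_neg_one i i' := by
    split_ifs <;> grind

namespace Matrix

def IsArcMatrix (A : Matrix m n R) : Prop := ∀ j, IsArcVector (A.col j)

lemma IsArcMatrix.submatrix {A : Matrix m n R} (hA : A.IsArcMatrix) {f : m' → m}
    (hf : f.Injective) {n' : Type*} (g : n' → n) : (A.submatrix f g).IsArcMatrix :=
  fun j => (hA (g j)).comp hf

lemma det_eq_zero_of_sum_rows_eq_zero [Fintype n] [DecidableEq n] [Nonempty n]
    {A : Matrix n n R} (h : ∀ j, ∑ i, A i j = 0) : A.det = 0 := by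
  obtain ⟨i₀⟩ := ‹Nonempty n›
  have hsum : (∑ i, A i : n → R) = 0 := funext fun j => (Finset.sum_apply j _ _).trans (h j)
  simpa [hsum, det_eq_zero_of_row_eq_zero i₀] using (det_updateRow_sum A i₀ fun _ => 1).symm

lemma IsArcMatrix.det_mem_range_signType_cast {k : ℕ} {A : Matrix (Fin k) (Fin k) R}
    (hA : A.IsArcMatrix) : A.det ∈ Set.range SignType.cast := by
  induction k with
  | zero => exact ⟨1, by simp⟩
  | succ k ih =>
    by_cases hsparse : ∃ j i₀, ∀ i ≠ i₀, A i j = 0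
    · obtain ⟨j, i₀, hj⟩ := hsparse
      rw [det_succ_column A j, Fintype.sum_eq_single i₀ fun i hi => by simp [hj i hi]]
      change _ ∈ MonoidHom.mrange SignType.castHom.toMonoidHom
      have neg_one_mem : (-1 : R) ∈ MonoidHom.mrange SignType.castHom.toMonoidHom := ⟨-1, by simp⟩
      exact mul_mem (mul_mem (pow_mem neg_one_mem _) ((hA j).mem_range_signType_cast i₀))
        (ih (hA.submatrix Fin.succAbove_right_injective _))
    · push Not at hsparse
      refine ⟨0, (det_eq_zero_of_sum_rows_eq_zero fun j => ?_).symm⟩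
      obtain ⟨i₁, -, h₁⟩ := hsparse j 0
      obtain ⟨i₂, hne, h₂⟩ := hsparse j i₁
      exact (hA j).sum_eq_zero hne.symm h₁ h₂

lemma IsArcMatrix.isTotallyUnimodular {A : Matrix m n R} (hA : A.IsArcMatrix) :
    A.IsTotallyUnimodular :=
  fun _ _ g hf _ => (hA.submatrix hf g).det_mem_range_signType_cast

lemma det_submatrix_eq_add_of_col_eq_add [Fintype ι] [DecidableEq ι] [DecidableEq n]
    {B : Matrix m n R} {c : n} {u v : m → R} (h : ∀ i, B i c = u i + v i) (f : ι → m)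
    {g : ι → n} (hg : g.Injective) (hc : c ∈ Set.range g) :
    (B.submatrix f g).det =
      ((B.updateCol c u).submatrix f g).det + ((B.updateCol c v).submatrix f g).det := by
  obtain ⟨l, rfl⟩ := hc
  have submatrix_updateCol (w : m → R) :
      (B.updateCol (g l) w).submatrix f g = (B.submatrix f g).updateCol l (w ∘ f) := by
    ext a b
    simp [updateCol_apply, hg.eq_iff]
  rw [submatrix_updateCol, submatrix_updateCol, ← det_updateCol_add]
  congr 1
  ext a b
  by_cases hb : b = l <;> simp [hb, h]

lemma det_submatrix_eq_sign_add_sign [Fintype ι] [DecidableEq ι] [DecidableEq n]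
    {B : Matrix m n R} {c : n} {u v : m → R} (h : ∀ i, B i c = u i + v i)
    (hu : (B.updateCol c u).IsTotallyUnimodular) (hv : (B.updateCol c v).IsTotallyUnimodular)
    (f : ι → m) {g : ι → n} (hg : g.Injective) :
    ∃ s t : SignType, (B.submatrix f g).det = s + t := by
  rw [isTotallyUnimodular_iff_fintype] at hu hv
  by_cases hc : c ∈ Set.range g
  · obtain ⟨s, hs⟩ := hu ι f g
    obtain ⟨t, ht⟩ := hv ι f g
    exact ⟨s, t, by rw [det_submatrix_eq_add_of_col_eq_add h f hg hc, hs, ht]⟩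
  · obtain ⟨s, hs⟩ := hu ι f g
    refine ⟨s, 0, ?_⟩
    have hB : (B.updateCol c u).submatrix f g = B.submatrix f g := by
      ext a b
      have : g b ≠ c := fun hb => hc ⟨b, hb⟩
      simp [this]
    rw [← hB, hs, SignType.coe_zero, add_zero]

lemma linearIndependent_col_iff_exists_det_submatrix_ne_zero {K : Type*} [Field K] [Fintype m]
    [Fintype n] [DecidableEq n] (A : Matrix m n K) :
    LinearIndependent K A.col ↔ ∃ f : n → m, (A.submatrix f id).det ≠ 0 := by
  constructor
  · intro hA
    have span_row : Submodule.span K (Set.range A.row) = ⊤ := by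
      apply Submodule.eq_top_of_finrank_eq
      rw [← rank_eq_finrank_span_row, ← rank_transpose, hA.rank_matrix,
        Module.finrank_fintype_fun_eq_card]
    obtain ⟨κ, a, ha, hspan, hli⟩ := exists_linearIndependent' K A.row
    have : Fintype κ := Fintype.ofInjective a ha
    have hcard : Fintype.card n = Fintype.card κ := by
      rw [linearIndependent_iff_card_eq_finrank_span.mp hli, Set.finrank, hspan, span_row,
        finrank_top, Module.finrank_fintype_fun_eq_card]
    let e := Fintype.equivOfCardEq hcard
    refine ⟨a ∘ e, ((isUnit_iff_isUnit_det _).mp ?_).ne_zero⟩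
    exact linearIndependent_rows_iff_isUnit.mp (hli.comp e e.injective)
  · rintro ⟨f, hf⟩
    have hcols := linearIndependent_cols_iff_isUnit.mpr ((isUnit_iff_isUnit_det _).mpr hf.isUnit)
    exact LinearIndependent.of_comp (LinearMap.funLeft K K f) hcols

lemma linearIndependent_col_map_iff {K : Type*} [Field K] [Fintype m] [Fintype n] [DecidableEq n]
    (φ : R →+* K) (A : Matrix m n R) :
    LinearIndependent K (A.map φ).col ↔ ∃ f : n → m, φ (A.submatrix f id).det ≠ 0 := by
  simp only [linearIndependent_col_iff_exists_det_submatrix_ne_zero, RingHom.map_det,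
    RingHom.mapMatrix_apply, submatrix_map]

end Matrix

lemma isArcMatrix_hmat_updateCol {r : ℕ} {w : Fin r → ℤ} (hw : IsArcVector w) :
    ((Hmat r).updateCol (Sum.inr (Sum.inr ())) w).IsArcMatrix := by
  rintro (k | p | u)
  · convert isArcVector_ite_sub_ite (P := (· = k)) (Q := fun _ => False)
      (fun _ _ h h' => h.trans h'.symm) (fun _ _ h => h.elim) using 1
    ext i
    simp [Hmat, col]
  · convert isArcVector_ite_sub_ite (P := (· = p.1.1)) (Q := (· = p.1.2))
      (fun _ _ h h' => h.trans h'.symm) (fun _ _ h h' => h.trans h'.symm) using 1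
    ext i
    simp [Hmat, col]
    split_ifs <;> rfl
  · convert hw using 1
    ext i
    simp [col, Subsingleton.elim u ()]

lemma hmat_det_submatrix_eq_sign_add_sign {r : ℕ} [Fintype ι] [DecidableEq ι] (f : ι → Fin r)
    {g : ι → Fin r ⊕ PairIdx r ⊕ Unit} (hg : g.Injective) :
    ∃ s t : SignType, ((Hmat r).submatrix f g).det = s + t := by
  let u : Fin r → ℤ := fun i => (if (i : ℕ) = 0 then 1 else 0) - (if (i : ℕ) = 1 then 1 else 0)
  let v : Fin r → ℤ := fun i => (if False then 1 else 0) - (if (i : ℕ) = 2 then 1 else 0)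
  have hu : IsArcVector u :=
    isArcVector_ite_sub_ite (fun _ _ h h' => Fin.ext (h.trans h'.symm))
      (fun _ _ h h' => Fin.ext (h.trans h'.symm))
  have hv : IsArcVector v :=
    isArcVector_ite_sub_ite (fun _ _ h => h.elim) (fun _ _ h h' => Fin.ext (h.trans h'.symm))
  refine det_submatrix_eq_sign_add_sign (c := Sum.inr (Sum.inr ())) (u := u) (v := v) ?_
    (isArcMatrix_hmat_updateCol hu).isTotallyUnimodular
    (isArcMatrix_hmat_updateCol hv).isTotallyUnimodular f hg
  intro i
  simp only [Hmat, u, v, if_false]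
  ring

theorem statement5_general (r : ℕ) (S : Set (Fin r ⊕ PairIdx r ⊕ Unit)) :
    LinearIndependent ℚ (fun c : S => fun i : Fin r => ((Hmat r i c.1 : ℤ) : ℚ)) ↔
    LinearIndependent (ZMod 3)
      (fun c : S => fun i : Fin r => ((Hmat r i c.1 : ℤ) : ZMod 3)) := by
  classical
  let A := (Hmat r).submatrix id ((↑) : S → Fin r ⊕ PairIdx r ⊕ Unit)
  change LinearIndependent ℚ (A.map (Int.castRingHom ℚ)).col ↔
    LinearIndependent (ZMod 3) (A.map (Int.castRingHom (ZMod 3))).col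
  simp only [linearIndependent_col_map_iff, A, submatrix_submatrix, Function.comp_id,
    Function.id_comp, eq_intCast]
  refine exists_congr fun f => ?_
  obtain ⟨s, t, hst⟩ := hmat_det_submatrix_eq_sign_add_sign f Subtype.val_injective
  rw [hst, Int.cast_ne_zero, ne_eq, ne_eq, ZMod.intCast_zmod_eq_zero_iff_dvd]
  cases s <;> cases t <;> decide

/-- For every set `S` of columns of `H_r`, the columns indexed by `S` are linearly
independent over `ℚ` if and only if their reductions modulo `3` are linearly
independent over `ZMod 3`; i.e. the vector matroids of `H_r` over `ℝ` and `GF(3)`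
coincide. -/
theorem statement5 (r : ℕ) (hr : 3 ≤ r) (S : Set (Fin r ⊕ PairIdx r ⊕ Unit)) :
    LinearIndependent ℚ (fun c : S => fun i : Fin r => ((Hmat r i c.1 : ℤ) : ℚ)) ↔
    LinearIndependent (ZMod 3)
      (fun c : S => fun i : Fin r => ((Hmat r i c.1 : ℤ) : ZMod 3)) :=
  statement5_general r S
end

section
/- There is no 4 × 8 integer matrix A with the following properties: A has rank 4 over ℚ; every 4 × 4 submatrix of A has determinant of absolute value at most 2; the space spanned over ℚ by columns 1–4 of A has dimension 2 and every two of these four columns are linearly independent; and the space spanned over ℚ by columns 5–8 of A has dimension 2 and every two of these four columns are linearly independent. (Equivalently, the matroid U_{2,4} ⊕ U_{2,4} has no 2-modular representation over ℝ.) -/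
/-- A column of an integer matrix, viewed as a vector over `ℚ`. -/
def colQ {m n : ℕ} (A : Matrix (Fin m) (Fin n) ℤ) (j : Fin n) : Fin m → ℚ :=
  fun i => (A i j : ℚ)

/-!
Write `c₀, …, c₃` and `e₀, …, e₃` for the two groups of columns and
`m(ij, kl) = det (cᵢ, cⱼ, eₖ, eₗ)`. Writing each group in a basis of the plane it spans gives
`m(ij, kl) = pᵢⱼ qₖₗ D`, where `p` and `q` are Plücker coordinates of the two planes. Since the
planes span `ℚ⁴`, all these minors are non-zero integers of absolute value at most `2`. Hence
`Xᵢⱼ = m(ij, 01)` and `Yₖₗ = m(01, kl)` satisfy the Plücker relation, and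
`Xᵢⱼ Yₖₗ = m(01, 01) m(ij, kl)`. A Plücker relation whose six terms are all odd, or all twice an
odd number, fails by parity, so `X` and `Y` each have an odd and an even entry. An even entry of
`X` times an even entry of `Y` is `±4`, which forces `m(01, 01) = ±2`; but then an odd entry of
`X` times an odd entry of `Y` would be even.
-/

open Function Matrix Submodule Module

theorem AlternatingMap.map_update_update_smul_add {R M N ι : Type*} [CommRing R]
    [AddCommGroup M] [Module R M] [AddCommGroup N] [Module R N] [DecidableEq ι]
    (f : M [⋀^ι]→ₗ[R] N) (v : ι → M) {i j : ι} (hij : i ≠ j) (a b : M) (p q r s : R) :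
    f (update (update v i (p • a + q • b)) j (r • a + s • b)) =
      (p * s - q * r) • f (update (update v i a) j b) := by
  set g : M → M → N := fun x y => f (update (update v i x) j y) with hg
  have add_left : ∀ x x' y, g (x + x') y = g x y + g x' y := fun x x' y => by
    simp only [hg, update_comm hij, f.map_update_add]
  have smul_left : ∀ (t : R) x y, g (t • x) y = t • g x y := fun t x y => by
    simp only [hg, update_comm hij, f.map_update_smul]
  have add_right : ∀ x y y', g x (y + y') = g x y + g x y' := fun x y y' =>
    f.map_update_add _ _ _ _
  have smul_right : ∀ (t : R) x y, g x (t • y) = t • g x y := fun t x y =>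
    f.map_update_smul _ _ _ _
  have self : ∀ x, g x x = 0 := fun x => f.map_update_update v hij x
  have swap : g b a = - g a b := by
    have h := self (a + b)
    rw [add_left, add_right, add_right, self, self] at h
    exact eq_neg_of_add_eq_zero_right (by simpa using h)
  show g _ _ = _
  simp only [add_left, add_right, smul_left, smul_right, self, swap, smul_zero, smul_neg,
    smul_smul, sub_smul]
  abel

theorem Matrix.det_of_smul_add {R : Type*} [CommRing R] (u v w z : Fin 4 → R)
    (p q r s p' q' r' s' : R) :
    det (of ![p • u + q • v, r • u + s • v, p' • w + q' • z, r' • w + s' • z]) =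
      (p * s - q * r) * (p' * s' - q' * r') * det (of ![u, v, w, z]) := by
  have h01 := detRowAlternating.map_update_update_smul_add
    ![u, v, p' • w + q' • z, r' • w + s' • z] (show (0 : Fin 4) ≠ 1 by decide) u v p q r s
  have h23 := detRowAlternating.map_update_update_smul_add
    ![u, v, w, z] (show (2 : Fin 4) ≠ 3 by decide) w z p' q' r' s'
  have upd01 : ∀ a b c d x y : Fin 4 → R, update (update ![a, b, c, d] 0 x) 1 y = ![x, y, c, d] :=
    fun _ _ _ _ _ _ => by ext k; fin_cases k <;> rfl
  have upd23 : ∀ a b c d x y : Fin 4 → R, update (update ![a, b, c, d] 2 x) 3 y = ![a, b, x, y] :=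
    fun _ _ _ _ _ _ => by ext k; fin_cases k <;> rfl
  rw [upd01, upd01] at h01
  rw [upd23, upd23] at h23
  have hdet : ∀ v : Fin 4 → Fin 4 → R, det (of v) = detRowAlternating v := fun _ => rfl
  rw [hdet, hdet, h01, h23, smul_eq_mul, smul_eq_mul, mul_assoc]

section LinearAlgebra

variable {K : Type*} [Field K]

theorem Matrix.det_of_ne_zero_of_span_eq_top {n : Type*} [Fintype n] [DecidableEq n]
    {v : n → n → K} (h : span K (Set.range v) = ⊤) : det (of v) ≠ 0 := by
  have hli : LinearIndependent K v :=
    linearIndependent_of_top_le_span_of_card_eq_finrank h.ge (by simp)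
  exact ((isUnit_iff_isUnit_det _).mp (linearIndependent_rows_iff_isUnit.mp hli)).ne_zero

theorem Matrix.eq_top_of_rank_eq_of_col_mem {m n : ℕ} {M : Matrix (Fin m) (Fin n) K}
    (hM : M.rank = m) {W : Submodule K (Fin m → K)} (hW : ∀ j, M.col j ∈ W) : W = ⊤ := by
  have htop : span K (Set.range M.col) = ⊤ :=
    eq_top_of_finrank_eq (by rw [← rank_eq_finrank_span_cols, hM, Module.finrank_fin_fun])
  exact eq_top_iff.mpr (htop ▸ span_le.mpr (Set.range_subset_iff.mpr hW))

variable {V ι : Type*} [AddCommGroup V] [Module K V]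

theorem span_pair_eq_span_range {c : ι → V} (hc : finrank K (span K (Set.range c)) = 2)
    {i j : ι} (hij : LinearIndependent K ![c i, c j]) :
    span K {c i, c j} = span K (Set.range c) := by
  have : FiniteDimensional K (span K (Set.range c)) := Module.finite_of_finrank_pos (by omega)
  refine eq_of_le_of_finrank_le
    (span_le.mpr (Set.pair_subset (subset_span ⟨i, rfl⟩) (subset_span ⟨j, rfl⟩))) ?_
  have h2 := finrank_span_eq_card hij
  rw [range_cons_cons_empty, Fintype.card_fin] at h2
  rw [hc, h2]

theorem exists_smul_add_eq_of_finrank_eq_two {c : ι → V}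
    (hc : finrank K (span K (Set.range c)) = 2) {i j : ι}
    (hij : LinearIndependent K ![c i, c j]) :
    ∃ α β : ι → K, ∀ k, c k = α k • c i + β k • c j := by
  have hmem : ∀ k, ∃ a b : K, a • c i + b • c j = c k := fun k =>
    mem_span_pair.mp (span_pair_eq_span_range hc hij ▸ subset_span ⟨k, rfl⟩)
  choose α β hαβ using hmem
  exact ⟨α, β, fun k => (hαβ k).symm⟩

theorem det_of_ne_zero_of_sup_eq_top {c e : ι → Fin 4 → K}
    (hsup : span K (Set.range c) ⊔ span K (Set.range e) = ⊤)
    (hc : finrank K (span K (Set.range c)) = 2) (he : finrank K (span K (Set.range e)) = 2)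
    {i j k l : ι} (hij : LinearIndependent K ![c i, c j])
    (hkl : LinearIndependent K ![e k, e l]) :
    det (of ![c i, c j, e k, e l]) ≠ 0 := by
  refine det_of_ne_zero_of_span_eq_top (eq_top_iff.mpr ?_)
  rw [← hsup, ← span_pair_eq_span_range hc hij, ← span_pair_eq_span_range he hkl]
  exact sup_le (span_mono (Set.pair_subset ⟨0, rfl⟩ ⟨1, rfl⟩))
    (span_mono (Set.pair_subset ⟨2, rfl⟩ ⟨3, rfl⟩))

end LinearAlgebra

def pluckerCoord {ι R : Type*} [CommRing R] (α β : ι → R) (i j : ι) : R :=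
  α i * β j - α j * β i

theorem det_of_eq_pluckerCoord_mul {ι R : Type*} [CommRing R] {c e : ι → Fin 4 → R}
    {α β γ δ : ι → R} {u v w z : Fin 4 → R} (hc : ∀ i, c i = α i • u + β i • v)
    (he : ∀ k, e k = γ k • w + δ k • z) (i j k l : ι) :
    det (of ![c i, c j, e k, e l]) =
      pluckerCoord α β i j * pluckerCoord γ δ k l * det (of ![u, v, w, z]) := by
  rw [hc i, hc j, he k, he l, det_of_smul_add, pluckerCoord, pluckerCoord]
  ring

def pluckerForm {R : Type*} [CommRing R] (x : Fin 4 → Fin 4 → R) : R :=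
  x 0 1 * x 2 3 - x 0 2 * x 1 3 + x 0 3 * x 1 2

theorem pluckerForm_pluckerCoord {R : Type*} [CommRing R] (α β : Fin 4 → R) :
    pluckerForm (pluckerCoord α β) = 0 := by
  simp only [pluckerForm, pluckerCoord]
  ring

theorem pluckerForm_ne_zero {k : ℤ} (hk : k ≠ 0) {x : Fin 4 → Fin 4 → ℤ}
    (hx : ∀ i j, i ≠ j → ∃ y, Odd y ∧ x i j = k * y) : pluckerForm x ≠ 0 := by
  obtain ⟨a, ha, hxa⟩ := hx 0 1 (by decide)
  obtain ⟨b, hb, hxb⟩ := hx 2 3 (by decide)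
  obtain ⟨c, hc, hxc⟩ := hx 0 2 (by decide)
  obtain ⟨d, hd, hxd⟩ := hx 1 3 (by decide)
  obtain ⟨e, he, hxe⟩ := hx 0 3 (by decide)
  obtain ⟨f, hf, hxf⟩ := hx 1 2 (by decide)
  have hodd : Odd (a * b - c * d + e * f) :=
    ((ha.mul hb).sub_odd (hc.mul hd)).add_odd (he.mul hf)
  have hx : pluckerForm x = k ^ 2 * (a * b - c * d + e * f) := by
    rw [pluckerForm, hxa, hxb, hxc, hxd, hxe, hxf]
    ring
  rw [hx]
  exact mul_ne_zero (pow_ne_zero 2 hk) fun h => Int.not_even_iff_odd.mpr hodd (h ▸ Even.zero)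

theorem exists_odd_and_exists_even_of_pluckerForm_eq_zero {x : Fin 4 → Fin 4 → ℤ}
    (hx : ∀ i j, i ≠ j → x i j ≠ 0 ∧ |x i j| ≤ 2) (h : pluckerForm x = 0) :
    (∃ i j, i ≠ j ∧ Odd (x i j)) ∧ ∃ i j, i ≠ j ∧ Even (x i j) := by
  constructor
  · by_contra! hodd
    refine pluckerForm_ne_zero two_ne_zero (fun i j hij => ?_) h
    have hev := Int.even_iff.mp (Int.not_odd_iff_even.mp (hodd i j hij))
    obtain ⟨hne, hle⟩ := hx i j hij
    have := abs_le.mp hle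
    exact ⟨x i j / 2, Int.odd_iff.mpr (by omega), by omega⟩
  · by_contra! heven
    exact pluckerForm_ne_zero one_ne_zero
      (fun i j hij => ⟨x i j, Int.not_even_iff_odd.mp (heven i j hij), (one_mul _).symm⟩) h

theorem Int.abs_eq_two_of_even {x : ℤ} (h0 : x ≠ 0) (hle : |x| ≤ 2) (hev : Even x) :
    |x| = 2 := by
  have := Int.even_iff.mp hev
  have := abs_le.mp hle
  rw [abs_eq zero_le_two]
  omega

theorem not_forall_abs_le_two_of_mul_eq {X Y : Fin 4 → Fin 4 → ℤ}
    (hX : ∀ i j, i ≠ j → X i j ≠ 0 ∧ |X i j| ≤ 2) (hY : ∀ i j, i ≠ j → Y i j ≠ 0 ∧ |Y i j| ≤ 2)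
    (hXp : pluckerForm X = 0) (hYp : pluckerForm Y = 0) {d : ℤ} (hd : |d| ≤ 2)
    {Z : Fin 4 → Fin 4 → Fin 4 → Fin 4 → ℤ} (hXY : ∀ i j k l, X i j * Y k l = d * Z i j k l) :
    ¬ ∀ i j k l, |Z i j k l| ≤ 2 := by
  intro hZ
  obtain ⟨⟨i, j, hij, hXi⟩, ⟨i', j', hij', hXi'⟩⟩ :=
    exists_odd_and_exists_even_of_pluckerForm_eq_zero hX hXp
  obtain ⟨⟨k, l, hkl, hYk⟩, ⟨k', l', hkl', hYk'⟩⟩ :=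
    exists_odd_and_exists_even_of_pluckerForm_eq_zero hY hYp
  obtain ⟨hX0, hXle⟩ := hX i' j' hij'
  obtain ⟨hY0, hYle⟩ := hY k' l' hkl'
  have hdZ : |d| * |Z i' j' k' l'| = 2 * 2 := by
    rw [← abs_mul, ← hXY, abs_mul, Int.abs_eq_two_of_even hX0 hXle hXi',
      Int.abs_eq_two_of_even hY0 hYle hYk']
  have hd2 : |d| = 2 := by nlinarith [abs_nonneg d, abs_nonneg (Z i' j' k' l'), hZ i' j' k' l']
  have hd_even : Even d := even_abs.mp (hd2 ▸ even_two)
  exact Int.not_even_iff_odd.mpr (hXi.mul hYk) (hXY i j k l ▸ hd_even.mul_right _)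

theorem not_forall_abs_le_two_of_cast_eq_pluckerCoord_mul
    {m : Fin 4 → Fin 4 → Fin 4 → Fin 4 → ℤ} {α β γ δ : Fin 4 → ℚ} {D : ℚ}
    (hm : ∀ i j k l, (m i j k l : ℚ) = pluckerCoord α β i j * pluckerCoord γ δ k l * D)
    (hne : ∀ i j k l, i ≠ j → k ≠ l → m i j k l ≠ 0) :
    ¬ ∀ i j k l, |m i j k l| ≤ 2 := by
  intro hb
  have hXp : ((pluckerForm fun i j => m i j 0 1 : ℤ) : ℚ) =
      (pluckerCoord γ δ 0 1 * D) ^ 2 * pluckerForm (pluckerCoord α β) := by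
    simp only [pluckerForm]; push_cast; simp only [hm]; ring
  have hYp : ((pluckerForm fun k l => m 0 1 k l : ℤ) : ℚ) =
      (pluckerCoord α β 0 1 * D) ^ 2 * pluckerForm (pluckerCoord γ δ) := by
    simp only [pluckerForm]; push_cast; simp only [hm]; ring
  rw [pluckerForm_pluckerCoord, mul_zero] at hXp hYp
  refine not_forall_abs_le_two_of_mul_eq (X := fun i j => m i j 0 1) (Y := fun k l => m 0 1 k l)
    (fun i j hij => ⟨hne _ _ _ _ hij (by decide), hb _ _ _ _⟩)
    (fun k l hkl => ⟨hne _ _ _ _ (by decide) hkl, hb _ _ _ _⟩)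
    (by exact_mod_cast hXp) (by exact_mod_cast hYp) (hb 0 1 0 1) (fun i j k l => ?_) hb
  have h : ((m i j 0 1 * m 0 1 k l : ℤ) : ℚ) = ((m 0 1 0 1 * m i j k l : ℤ) : ℚ) := by
    push_cast; simp only [hm]; ring
  exact_mod_cast h

theorem cast_det_submatrix_eq_det_colQ {n : ℕ} (A : Matrix (Fin 4) (Fin n) ℤ) (a b c d : Fin n) :
    (((A.submatrix id ![a, b, c, d]).det : ℤ) : ℚ) =
      det (of ![colQ A a, colQ A b, colQ A c, colQ A d]) := by
  rw [← eq_intCast (Int.castRingHom ℚ), RingHom.map_det, ← det_transpose]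
  congr 1
  ext i j
  fin_cases i <;> rfl

/-- The matroid `U_{2,4} ⊕ U_{2,4}` has no `2`-modular representation over `ℝ`:
there is no rank-`4` `2`-modular `4 × 8` integer matrix whose first four columns span
a `2`-dimensional space and are pairwise non-parallel, and likewise for the last four
columns. -/
theorem statement9 :
    ¬ ∃ A : Matrix (Fin 4) (Fin 8) ℤ,
      (A.map ((↑) : ℤ → ℚ)).rank = 4 ∧
      (∀ (f : Fin 4 → Fin 4) (g : Fin 4 → Fin 8), |(A.submatrix f g).det| ≤ 2) ∧
      Module.finrank ℚ
        (Submodule.span ℚ (Set.range fun j : Fin 4 => colQ A ⟨j.1, by omega⟩)) = 2 ∧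
      (∀ j j' : Fin 4, j ≠ j' →
        LinearIndependent ℚ ![colQ A ⟨j.1, by omega⟩, colQ A ⟨j'.1, by omega⟩]) ∧
      Module.finrank ℚ
        (Submodule.span ℚ (Set.range fun j : Fin 4 => colQ A ⟨j.1 + 4, by omega⟩)) = 2 ∧
      (∀ j j' : Fin 4, j ≠ j' →
        LinearIndependent ℚ ![colQ A ⟨j.1 + 4, by omega⟩, colQ A ⟨j'.1 + 4, by omega⟩]) := by
  rintro ⟨A, hrank, hminor, hfr₁, hind₁, hfr₂, hind₂⟩
  set c : Fin 4 → Fin 4 → ℚ := fun j => colQ A ⟨j.1, by omega⟩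
  set e : Fin 4 → Fin 4 → ℚ := fun j => colQ A ⟨j.1 + 4, by omega⟩
  have hsup : span ℚ (Set.range c) ⊔ span ℚ (Set.range e) = ⊤ := by
    refine eq_top_of_rank_eq_of_col_mem hrank fun j => ?_
    by_cases hj : j.1 < 4
    · exact mem_sup_left (subset_span ⟨⟨j.1, hj⟩, rfl⟩)
    · exact mem_sup_right (subset_span ⟨⟨j.1 - 4, by omega⟩,
        congrArg (colQ A) (Fin.ext (by simp only; omega))⟩)
  obtain ⟨α, β, hαβ⟩ := exists_smul_add_eq_of_finrank_eq_two hfr₁ (hind₁ 0 1 (by decide))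
  obtain ⟨γ, δ, hγδ⟩ := exists_smul_add_eq_of_finrank_eq_two hfr₂ (hind₂ 0 1 (by decide))
  refine not_forall_abs_le_two_of_cast_eq_pluckerCoord_mul (α := α) (β := β) (γ := γ) (δ := δ)
    (D := det (of ![c 0, c 1, e 0, e 1]))
    (m := fun i j k l => (A.submatrix id ![⟨i.1, by omega⟩, ⟨j.1, by omega⟩,
      ⟨k.1 + 4, by omega⟩, ⟨l.1 + 4, by omega⟩]).det)
    (fun i j k l => ?_) (fun i j k l hij hkl hzero => ?_) (fun i j k l => hminor id _)
  · rw [cast_det_submatrix_eq_det_colQ]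
    exact det_of_eq_pluckerCoord_mul hαβ hγδ i j k l
  · refine det_of_ne_zero_of_sup_eq_top hsup hfr₁ hfr₂ (hind₁ i j hij) (hind₂ k l hkl) ?_
    rw [← cast_det_submatrix_eq_det_colQ, hzero, Int.cast_zero]
end

section
/- There exists a 3 × 7 integer matrix A with the following properties: A has rank 3 over ℚ; every 3 × 3 submatrix of A has determinant of absolute value at most 2; columns 1, 2, 3 of A are nonzero and pairwise linearly dependent over ℚ (pairwise parallel); and columns 4, 5, 6, 7 of A span a 2-dimensional ℚ-subspace with every two of them linearly independent. (Equivalently, the matroid U_{1,3} ⊕ U_{2,4} has a 2-modular representation over ℝ.) -/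
/-!
Take the columns `e₀, e₀, e₀ | e₁, e₂, e₁ + e₂, e₁ - e₂`. The `U_{2,4}` block lies in the plane
`x₀ = 0`, so a `3 × 3` minor is nonzero only if it uses one copy of `e₀` and two columns of that
block, and then it is, up to sign, a `2 × 2` minor of `(1,0), (0,1), (1,1), (1,-1)`; the largest
of these is `det [[1, 1], [1, -1]] = -2`.
-/

open Submodule

section Minors

variable {R : Type*} [CommRing R] [LinearOrder R] [IsStrictOrderedRing R]
  {m n : Type*} [Fintype m] [DecidableEq m]

theorem Matrix.abs_det_submatrix_le_of_forall_cols {A : Matrix m n R} {Δ : R} (hΔ : 0 ≤ Δ)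
    (hA : ∀ g : m → n, |(A.submatrix id g).det| ≤ Δ) (f : m → m) (g : m → n) :
    |(A.submatrix f g).det| ≤ Δ := by
  by_cases hf : f.Injective
  · let e := Equiv.ofBijective f ⟨hf, Finite.surjective_of_injective hf⟩
    have : A.submatrix f g = (A.submatrix id g).submatrix e (Equiv.refl m) := rfl
    rw [this, Matrix.abs_det_submatrix_equiv_equiv]
    exact hA g
  · obtain ⟨i, j, hfij, hij⟩ : ∃ i j, f i = f j ∧ i ≠ j := by
      simpa [Function.Injective] using hf
    rw [Matrix.det_zero_of_row_eq hij (funext fun k => by simp [hfij])]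
    simpa using hΔ

end Minors

section PairsOfVectors

variable {K V : Type*} [Field K] [AddCommGroup V] [Module K V]

theorem LinearIndependent.pair_of_minor_ne_zero {ι : Type*} {u v : ι → K} (i k : ι)
    (h : u i * v k - u k * v i ≠ 0) : LinearIndependent K ![u, v] := by
  rw [LinearIndependent.pair_iff]
  intro s t hst
  have hi := congrFun hst i
  have hk := congrFun hst k
  simp only [Pi.add_apply, Pi.smul_apply, smul_eq_mul, Pi.zero_apply] at hi hk
  refine ⟨?_, ?_⟩
  · have : s * (u i * v k - u k * v i) = 0 := by linear_combination v k * hi - v i * hk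
    simpa [h] using this
  · have : t * (u i * v k - u k * v i) = 0 := by linear_combination u i * hk - u k * hi
    simpa [h] using this

theorem not_linearIndependent_pair_self (x : V) : ¬ LinearIndependent K ![x, x] :=
  fun h => zero_ne_one (h.injective (a₁ := 0) (a₂ := 1) rfl)

theorem finrank_span_range_eq_card_of_subfamily {ι κ : Type*} [Fintype κ] {w : ι → V}
    {b : κ → V} (hb : LinearIndependent K b) (hbw : Set.range b ⊆ Set.range w)
    (hwb : ∀ i, w i ∈ span K (Set.range b)) :
    Module.finrank K (span K (Set.range w)) = Fintype.card κ := by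
  have : span K (Set.range w) = span K (Set.range b) :=
    le_antisymm (span_le.2 (Set.range_subset_iff.2 hwb)) (span_mono hbw)
  rw [this, finrank_span_eq_card hb]

end PairsOfVectors

def u13SumU24Rep : Matrix (Fin 3) (Fin 7) ℤ :=
  !![1, 1, 1, 0, 0, 0,  0;
     0, 0, 0, 1, 0, 1,  1;
     0, 0, 0, 0, 1, 1, -1]

theorem u13SumU24Rep_abs_det_submatrix_cols_le (g : Fin 3 → Fin 7) :
    |(u13SumU24Rep.submatrix id g).det| ≤ 2 := by
  rw [Matrix.det_fin_three]
  simp only [Matrix.submatrix_apply, id]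
  generalize g 0 = a, g 1 = b, g 2 = c
  revert a b c
  decide

theorem u13SumU24Rep_rank : (u13SumU24Rep.map ((↑) : ℤ → ℚ)).rank = 3 := by
  have hid : (u13SumU24Rep.map ((↑) : ℤ → ℚ)).submatrix id ![0, 3, 4] = 1 := by
    ext i j; fin_cases i <;> fin_cases j <;> simp [u13SumU24Rep]
  refine le_antisymm (Matrix.rank_le_height _) ?_
  calc 3 = (1 : Matrix (Fin 3) (Fin 3) ℚ).rank := by simp
    _ ≤ _ := hid ▸ Matrix.rank_submatrix_le _ _ _

theorem u13SumU24Rep_colQ_of_lt_three (j : ℕ) (hj : j < 3) :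
    colQ u13SumU24Rep ⟨j, by omega⟩ = colQ u13SumU24Rep 0 := by
  ext i
  interval_cases j <;> fin_cases i <;> rfl

def u24BlockCol (j : Fin 4) : Fin 3 → ℚ :=
  colQ u13SumU24Rep ⟨j.1 + 3, Nat.add_lt_add_right j.2 3⟩

theorem linearIndependent_u24BlockCol_pair {j j' : Fin 4} (hjj' : j ≠ j') :
    LinearIndependent ℚ ![u24BlockCol j, u24BlockCol j'] := by
  apply LinearIndependent.pair_of_minor_ne_zero 1 2
  fin_cases j <;> fin_cases j' <;> simp_all [u24BlockCol, colQ, u13SumU24Rep, Matrix.cons_val]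
  norm_num

theorem finrank_span_range_u24BlockCol : Module.finrank ℚ (span ℚ (Set.range u24BlockCol)) = 2 := by
  refine finrank_span_range_eq_card_of_subfamily (b := ![u24BlockCol 0, u24BlockCol 1])
    (linearIndependent_u24BlockCol_pair (by decide))
    (Set.range_subset_iff.2 fun i => by fin_cases i; exacts [⟨0, rfl⟩, ⟨1, rfl⟩]) fun i => ?_
  rw [Matrix.range_cons_cons_empty, mem_span_pair]
  fin_cases i
  exacts [⟨1, 0, by simp⟩, ⟨0, 1, by simp⟩,
    ⟨1, 1, by ext k; fin_cases k <;> simp [u24BlockCol, colQ, u13SumU24Rep]⟩,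
    ⟨1, -1, by ext k; fin_cases k <;> simp [u24BlockCol, colQ, u13SumU24Rep]⟩]

/-- The matroid `U_{1,3} ⊕ U_{2,4}` has a `2`-modular representation over `ℝ`:
there is a rank-`3` `2`-modular `3 × 7` integer matrix whose first three columns are
nonzero and pairwise parallel, and whose last four columns span a `2`-dimensional
space and are pairwise non-parallel. -/
theorem statement10 :
    ∃ A : Matrix (Fin 3) (Fin 7) ℤ,
      (A.map ((↑) : ℤ → ℚ)).rank = 3 ∧
      (∀ (f : Fin 3 → Fin 3) (g : Fin 3 → Fin 7), |(A.submatrix f g).det| ≤ 2) ∧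
      (∀ j : Fin 3, colQ A ⟨j.1, by omega⟩ ≠ 0) ∧
      (∀ j j' : Fin 3, j ≠ j' →
        ¬ LinearIndependent ℚ ![colQ A ⟨j.1, by omega⟩, colQ A ⟨j'.1, by omega⟩]) ∧
      Module.finrank ℚ
        (Submodule.span ℚ (Set.range fun j : Fin 4 => colQ A ⟨j.1 + 3, by omega⟩)) = 2 ∧
      (∀ j j' : Fin 4, j ≠ j' →
        LinearIndependent ℚ ![colQ A ⟨j.1 + 3, by omega⟩, colQ A ⟨j'.1 + 3, by omega⟩]) := by
  refine ⟨u13SumU24Rep, u13SumU24Rep_rank,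
    Matrix.abs_det_submatrix_le_of_forall_cols (by norm_num)
      u13SumU24Rep_abs_det_submatrix_cols_le, ?_, ?_,
    finrank_span_range_u24BlockCol, fun _ _ => linearIndependent_u24BlockCol_pair⟩
  · intro j h
    have := congrFun (u13SumU24Rep_colQ_of_lt_three j j.2 ▸ h) 0
    simp [colQ, u13SumU24Rep] at this
  · intro j j' _
    rw [u13SumU24Rep_colQ_of_lt_three j j.2, u13SumU24Rep_colQ_of_lt_three j' j'.2]
    exact not_linearIndependent_pair_self _
end

section
/- Let B be the 2 × 3 integer matrix with rows (1, 1, 1) and (0, 2, 3). Then: (i) every 2 × 2 submatrix of B has determinant of absolute value at most 3 (so B is 3-modular); and (ii) there do not exist an invertible 2 × 2 matrix U over ℚ and a column index j ∈ {2, 3} such that U·B (computed over ℚ) has all integer entries and the two columns of U·B indexed by 1 and j are, in some order, the two standard basis vectors e_1 and e_2 of ℚ². (That is, B is not row-equivalent to an integer matrix with an I_2-submatrix that uses the first column.) -/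
/-!
The minors of `B` are `0, ±1, ±2, ±3`. For (ii), `(1, -3, 2)` spans the kernel of `B`, so the
columns `c₀, c₁, c₂` of any `U * B` satisfy `c₀ - 3 c₁ + 2 c₂ = 0`. If `c₀` and `c₁` are the two
unit vectors, then `2 c₂ = 3 c₁ - c₀` has an odd entry; if `c₀` and `c₂` are, then
`3 c₁ = c₀ + 2 c₂` has an entry `1` or `2`. Either way `U * B` is not integral.
-/

/-- The `2 × 3` integer matrix with rows `(1, 1, 1)` and `(0, 2, 3)`. -/
def Bmat : Matrix (Fin 2) (Fin 3) ℤ := !![1, 1, 1; 0, 2, 3]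

/-- `Bmat`, viewed over `ℚ`. -/
def BmatQ : Matrix (Fin 2) (Fin 3) ℚ := Bmat.map ((↑) : ℤ → ℚ)

open Matrix

lemma Bmat_abs_det_two_le (a b : Fin 2) (c d : Fin 3) :
    |Bmat a c * Bmat b d - Bmat a d * Bmat b c| ≤ 3 := by
  revert a b c d
  decide

lemma Bmat_abs_det_submatrix_le (f : Fin 2 → Fin 2) (g : Fin 2 → Fin 3) :
    |(Bmat.submatrix f g).det| ≤ 3 := by
  rw [det_fin_two]
  exact Bmat_abs_det_two_le _ _ _ _

lemma BmatQ_mulVec_kernel : BmatQ *ᵥ ![1, -3, 2] = 0 := by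
  ext i
  fin_cases i <;> simp [BmatQ, Bmat, mulVec, dotProduct, Fin.sum_univ_succ] <;> norm_num

lemma mul_BmatQ_column_relation (U : Matrix (Fin 2) (Fin 2) ℚ) (i : Fin 2) :
    (U * BmatQ) i 0 - 3 * (U * BmatQ) i 1 + 2 * (U * BmatQ) i 2 = 0 := by
  have h := congrFun (congrArg (U *ᵥ ·) BmatQ_mulVec_kernel) i
  rw [mulVec_mulVec, mulVec_zero] at h
  simp [mulVec, dotProduct, Fin.sum_univ_succ] at h
  linarith

lemma Rat.ne_intCast_of_mul_eq {n m : ℤ} {q : ℚ} (h : n * q = m) (hnm : ¬ n ∣ m) (z : ℤ) :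
    q ≠ z := by
  rintro rfl
  exact hnm ⟨z, by exact_mod_cast h.symm⟩

/-- The matrix `B` with rows `(1,1,1)` and `(0,2,3)` is `3`-modular, but no invertible
row transformation over `ℚ` turns `B` into an integer matrix having an `I_2`-submatrix
that uses the first column. -/
theorem statement11 :
    (∀ (f : Fin 2 → Fin 2) (g : Fin 2 → Fin 3), |(Bmat.submatrix f g).det| ≤ 3) ∧
    ¬ ∃ (U : Matrix (Fin 2) (Fin 2) ℚ) (j : Fin 3), IsUnit U ∧ j ≠ 0 ∧
        (∀ (i : Fin 2) (k : Fin 3), ∃ z : ℤ, (U * BmatQ) i k = (z : ℚ)) ∧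
        (((fun i => (U * BmatQ) i 0) = ![1, 0] ∧ (fun i => (U * BmatQ) i j) = ![0, 1]) ∨
         ((fun i => (U * BmatQ) i 0) = ![0, 1] ∧ (fun i => (U * BmatQ) i j) = ![1, 0])) := by
  refine ⟨Bmat_abs_det_submatrix_le, ?_⟩
  rintro ⟨U, j, -, hj, hint, hcols⟩
  set M := U * BmatQ
  have hrel := mul_BmatQ_column_relation U 0
  have hrow : (M 0 0 = 1 ∧ M 0 j = 0) ∨ (M 0 0 = 0 ∧ M 0 j = 1) := by
    rcases hcols with ⟨h0, hcolj⟩ | ⟨h0, hcolj⟩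
    · exact .inl ⟨by simpa using congrFun h0 0, by simpa using congrFun hcolj 0⟩
    · exact .inr ⟨by simpa using congrFun h0 0, by simpa using congrFun hcolj 0⟩
  obtain rfl | rfl : j = 1 ∨ j = 2 := by omega
  · obtain ⟨z, hz⟩ := hint 0 2
    rcases hrow with ⟨h0, h1⟩ | ⟨h0, h1⟩
    · exact Rat.ne_intCast_of_mul_eq (n := 2) (m := -1) (by push_cast; linarith) (by decide) z hz
    · exact Rat.ne_intCast_of_mul_eq (n := 2) (m := 3) (by push_cast; linarith) (by decide) z hz
  · obtain ⟨z, hz⟩ := hint 0 1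
    rcases hrow with ⟨h0, h2⟩ | ⟨h0, h2⟩
    · exact Rat.ne_intCast_of_mul_eq (n := 3) (m := 1) (by push_cast; linarith) (by decide) z hz
    · exact Rat.ne_intCast_of_mul_eq (n := 3) (m := 2) (by push_cast; linarith) (by decide) z hz
end

section
/- Let M be a simple matroid of rank 3 whose ground set E has exactly 9 elements, and suppose there exist an element x ∈ E and three distinct long lines L₁, L₂, L₃ of M, each containing x, with E = L₁ ∪ L₂ ∪ L₃. Then either M has a minor isomorphic to the uniform matroid U_{2,5}, or else (after suitably reindexing the three lines) |L₁| = |L₂| = 4 and |L₃| = 3, and each of the two elements of L₃ \ {x} lies on at least four long lines of M (so that M is isomorphic to the ternary Reid geometry R₉). -/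
variable {α : Type*}

/-- A matroid is simple if every subset of the ground set with at most two elements
is independent (equivalently, it has no loops and no parallel pairs). -/
def Matroid.IsSimpleMatroid (M : Matroid α) : Prop :=
  ∀ e ∈ M.E, ∀ f ∈ M.E, M.Indep {e, f}

/-- A line of a matroid: a flat of rank two. -/
def Matroid.IsLine (M : Matroid α) (L : Set α) : Prop :=
  M.IsFlat L ∧ ∃ I, M.IsBasis I L ∧ I.encard = 2

/-- A long line: a line with at least three elements. -/
def Matroid.IsLongLine (M : Matroid α) (L : Set α) : Prop :=
  M.IsLine L ∧ 3 ≤ L.encard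

/-- `M` has a minor isomorphic to `U_{2,5}`: there are disjoint sets `C, X ⊆ M.E`
with `C` independent and `|X| = 5` such that, in the minor of `M` obtained by
contracting `C` and restricting to `X`, a subset of `X` is independent exactly
when it has at most two elements. -/
def Matroid.HasU25Minor (M : Matroid α) : Prop :=
  ∃ C X : Set α, C ⊆ M.E ∧ X ⊆ M.E ∧ Disjoint C X ∧ M.Indep C ∧ X.encard = 5 ∧
    ∀ Y ⊆ X, (M.Indep (Y ∪ C) ↔ Y.encard ≤ 2)

/-!
Without a `U_{2,5}`-minor every line has at most four points, so counting the nine points on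
three lines through `x` that pairwise meet only in `x` forces the sizes `4, 4, 3`. Let `y ≠ x`
lie on the three-point line and project from `y`: the points of one four-point line `K₁` span
four distinct lines through `y`. If one of them misses the other four-point line `K₂`, it and
the four lines joining `y` to `K₂` are five distinct directions at `y`, i.e. a `U_{2,5}`-minor
of `M ／ y`; otherwise each of them meets `K₂` away from `x` and so is long.
-/

open Set

lemma Set.exists_subset_pair_of_encard_le_two {X Y : Set α} (hYX : Y ⊆ X)
    (hX : X.Nonempty) (hY : Y.encard ≤ 2) : ∃ a ∈ X, ∃ b ∈ X, Y ⊆ {a, b} := by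
  obtain rfl | ⟨a, ha⟩ := Y.eq_empty_or_nonempty
  · obtain ⟨a, ha⟩ := hX
    exact ⟨a, ha, a, ha, empty_subset _⟩
  have h₁ : (Y \ {a}).encard ≤ 1 := by
    rw [← encard_sdiff_singleton_add_one ha] at hY
    exact (ENat.add_le_add_iff_right ENat.one_ne_top).1 hY
  obtain h₀ | ⟨b, hb⟩ := (Y \ {a}).eq_empty_or_nonempty
  · exact ⟨a, hYX ha, a, hYX ha, by simpa [sdiff_eq_empty] using h₀⟩
  refine ⟨a, hYX ha, b, hYX hb.1, fun c hc ↦ ?_⟩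
  obtain rfl | hca := eq_or_ne c a
  · exact mem_insert c _
  · exact mem_insert_of_mem a (encard_le_one_iff.1 h₁ c b ⟨hc, hca⟩ hb)

lemma Set.encard_union_union_add_two {A B C : Set α} {x : α}
    (hAB : A ∩ B = {x}) (hAC : A ∩ C = {x}) (hBC : B ∩ C = {x}) :
    (A ∪ B ∪ C).encard + 2 = A.encard + B.encard + C.encard := by
  have hABC : (A ∪ B) ∩ C = {x} := by rw [union_inter_distrib_right, hAC, hBC, union_self]
  have h₁ := encard_union_add_encard_inter A B
  have h₂ := encard_union_add_encard_inter (A ∪ B) C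
  rw [hAB, encard_singleton] at h₁
  rw [hABC, encard_singleton] at h₂
  rw [← h₁, add_right_comm, ← h₂, add_assoc, one_add_one_eq_two]

lemma ENat.eq_four_four_three_of_add_eq_eleven {a b c : ℕ∞} (ha : 3 ≤ a) (hb : 3 ≤ b)
    (hc : 3 ≤ c) (ha' : a ≤ 4) (hb' : b ≤ 4) (hc' : c ≤ 4) (h : a + b + c = 11) :
    (a = 4 ∧ b = 4 ∧ c = 3) ∨ (a = 4 ∧ b = 3 ∧ c = 4) ∨ (a = 3 ∧ b = 4 ∧ c = 4) := by
  lift a to ℕ using (ha'.trans_lt (by decide)).ne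
  lift b to ℕ using (hb'.trans_lt (by decide)).ne
  lift c to ℕ using (hc'.trans_lt (by decide)).ne
  norm_cast at *
  omega

namespace Matroid

variable {M : Matroid α} {K K₁ K₂ K₃ L L' X : Set α} {a b v x y : α}

lemma IsLine.eRk_eq (hL : M.IsLine L) : M.eRk L = 2 := by
  obtain ⟨-, I, hI, hI2⟩ := hL
  rw [← hI.encard_eq_eRk, hI2]

lemma IsLine.eq_closure_pair (hs : M.IsSimpleMatroid) (hL : M.IsLine L) (ha : a ∈ L) (hb : b ∈ L)
    (hab : a ≠ b) : L = M.closure {a, b} := by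
  have hI : M.Indep {a, b} := hs a (hL.1.subset_ground ha) b (hL.1.subset_ground hb)
  have hbasis : M.IsBasis {a, b} L :=
    hI.isBasis_of_eRk_ge (toFinite _) (pair_subset ha hb)
      (by rw [hL.eRk_eq, hI.eRk_eq_encard, encard_pair hab]) hL.1.subset_ground
  rw [hbasis.closure_eq_closure, hL.1.closure]

lemma IsLine.inter_eq_singleton (hs : M.IsSimpleMatroid) (hL : M.IsLine L) (hL' : M.IsLine L')
    (hne : L ≠ L') (hx : x ∈ L) (hx' : x ∈ L') : L ∩ L' = {x} := by
  refine subset_antisymm (fun a ⟨ha, ha'⟩ ↦ ?_) (singleton_subset_iff.2 ⟨hx, hx'⟩)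
  by_contra hax
  exact hne ((hL.eq_closure_pair hs ha hx hax).trans (hL'.eq_closure_pair hs ha' hx' hax).symm)

lemma isLine_closure_pair (hs : M.IsSimpleMatroid) (ha : a ∈ M.E) (hb : b ∈ M.E) (hab : a ≠ b) :
    M.IsLine (M.closure {a, b}) :=
  ⟨M.isFlat_closure _, {a, b}, (hs a ha b hb).isBasis_closure, encard_pair hab⟩

lemma isLongLine_closure_pair (hs : M.IsSimpleMatroid) (ha : a ∈ M.E) (hb : b ∈ M.E) (hab : a ≠ b)
    (hv : v ∈ M.closure {a, b}) (hva : v ≠ a) (hvb : v ≠ b) :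
    M.IsLongLine (M.closure {a, b}) := by
  refine ⟨isLine_closure_pair hs ha hb hab, ?_⟩
  rw [← encard_eq_three.2 ⟨v, a, b, hva, hvb, hab, rfl⟩]
  exact encard_le_encard (insert_subset hv (M.subset_closure _ (pair_subset ha hb)))

lemma injOn_closure_pair (hs : M.IsSimpleMatroid) (hK : M.IsLine K) (hy : y ∈ M.E)
    (hyK : y ∉ K) : K.InjOn fun t ↦ M.closure {y, t} := by
  intro s hsK t htK (hst : M.closure {y, s} = M.closure {y, t})
  by_contra hne
  have hyLine : M.IsLine (M.closure {y, s}) :=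
    isLine_closure_pair hs hy (hK.1.subset_ground hsK) (ne_of_mem_of_not_mem hsK hyK).symm
  have ht : t ∈ M.closure {y, s} := hst ▸ M.mem_closure_of_mem' (by simp) (hK.1.subset_ground htK)
  have hsLine : M.closure {y, s} = K := by
    rw [hK.eq_closure_pair hs hsK htK hne,
      hyLine.eq_closure_pair hs (M.mem_closure_of_mem' (by simp) (hK.1.subset_ground hsK)) ht hne]
  exact hyK (hsLine ▸ M.mem_closure_of_mem' (mem_insert y {s}) hy)

lemma IsLine.hasU25Minor_of_five_le_encard (hs : M.IsSimpleMatroid) (hL : M.IsLine L)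
    (h5 : 5 ≤ L.encard) : M.HasU25Minor := by
  obtain ⟨X, hXL, hX5⟩ := exists_subset_encard_eq h5
  have hXE : X ⊆ M.E := hXL.trans hL.1.subset_ground
  refine ⟨∅, X, empty_subset _, hXE, empty_disjoint _, M.empty_indep, hX5, fun Y hYX ↦ ?_⟩
  rw [union_empty]
  refine ⟨fun hY ↦ hL.eRk_eq ▸ hY.encard_le_eRk_of_subset (hYX.trans hXL), fun hY ↦ ?_⟩
  obtain ⟨a, ha, b, hb, hYab⟩ :=
    exists_subset_pair_of_encard_le_two hYX (nonempty_of_encard_ne_zero (by simp [hX5])) hY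
  exact (hs a (hXE ha) b (hXE hb)).subset hYab

lemma hasU25Minor_of_injOn_closure_pair (hs : M.IsSimpleMatroid) (hr : M.eRank ≤ 3)
    (hy : y ∈ M.E) (hXE : X ⊆ M.E) (hyX : y ∉ X) (hX5 : X.encard = 5)
    (hinj : X.InjOn fun u ↦ M.closure {y, u}) : M.HasU25Minor := by
  have hindep : ∀ u ∈ X, ∀ v ∈ X, M.Indep (insert y {u, v}) := by
    intro u hu v hv
    obtain rfl | huv := eq_or_ne u v
    · simpa using hs y hy u (hXE hu)
    rw [pair_comm, insert_comm, (hs y hy u (hXE hu)).insert_indep_iff_of_notMem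
      (by simp [huv.symm, ne_of_mem_of_not_mem hv hyX])]
    refine ⟨hXE hv, fun hvyu ↦ huv (hinj hu hv ?_)⟩
    have hyu : y ≠ u := (ne_of_mem_of_not_mem hu hyX).symm
    exact ((isLine_closure_pair hs hy (hXE hu) hyu).eq_closure_pair hs
      (M.mem_closure_of_mem' (mem_insert y {u}) hy) hvyu (ne_of_mem_of_not_mem hv hyX).symm)
  refine ⟨{y}, X, singleton_subset_iff.2 hy, hXE, disjoint_singleton_left.2 hyX,
    by simpa using hs y hy y hy, hX5, fun Y hYX ↦ ⟨fun hY ↦ ?_, fun hY ↦ ?_⟩⟩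
  · have h3 := (hY.encard_le_eRank).trans hr
    rw [union_singleton, encard_insert_of_notMem fun h ↦ hyX (hYX h)] at h3
    exact (ENat.add_le_add_iff_right ENat.one_ne_top).1 h3
  · obtain ⟨u, hu, v, hv, hYuv⟩ :=
      exists_subset_pair_of_encard_le_two hYX (nonempty_of_encard_ne_zero (by simp [hX5])) hY
    rw [union_singleton]
    exact (hindep u hu v hv).subset (insert_subset_insert hYuv)

lemma hasU25Minor_or_four_le_encard_longLines (hs : M.IsSimpleMatroid) (hr : M.eRank ≤ 3)
    (hK₁ : M.IsLine K₁) (hK₂ : M.IsLine K₂) (hK₃ : M.IsLongLine K₃)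
    (h₁₂ : K₁ ∩ K₂ = {x}) (h₁₃ : K₁ ∩ K₃ = {x}) (h₂₃ : K₂ ∩ K₃ = {x})
    (h₁ : K₁.encard = 4) (h₂ : K₂.encard = 4) (hy : y ∈ K₃ \ {x}) :
    M.HasU25Minor ∨ 4 ≤ {L | M.IsLongLine L ∧ y ∈ L}.encard := by
  set f : α → Set α := fun t ↦ M.closure {y, t}
  have hyE : y ∈ M.E := hK₃.1.1.subset_ground hy.1
  have hx₁ : x ∈ K₁ := (h₁₂.symm.subset rfl).1
  have hyx : y ≠ x := hy.2
  have hy₁ : y ∉ K₁ := fun h ↦ hyx (h₁₃.subset ⟨h, hy.1⟩)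
  have hy₂ : y ∉ K₂ := fun h ↦ hyx (h₂₃.subset ⟨h, hy.1⟩)
  have hf₁ := injOn_closure_pair hs hK₁ hyE hy₁
  have hf₂ := injOn_closure_pair hs hK₂ hyE hy₂
  have hfx : f x = K₃ := (hK₃.1.eq_closure_pair hs hy.1 (h₁₃.symm.subset rfl).2 hyx).symm
  by_cases h : f '' K₁ ⊆ f '' K₂
  · right
    rw [← h₁, ← hf₁.encard_image]
    refine encard_le_encard ?_
    rintro _ ⟨a, ha, rfl⟩
    refine ⟨?_, M.mem_closure_of_mem' (mem_insert y {a}) hyE⟩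
    obtain rfl | hax := eq_or_ne a x
    · exact (congrArg M.IsLongLine hfx).mpr hK₃
    obtain ⟨w, hw, hfw⟩ := h ⟨a, ha, rfl⟩
    have hwx : w ≠ x := by
      rintro rfl
      exact hax (hf₁ ha hx₁ hfw.symm)
    have hwa : w ≠ a := fun hwa ↦ hwx (h₁₂.subset ⟨hwa ▸ ha, hw⟩)
    have hwf : w ∈ f a := hfw ▸ M.mem_closure_of_mem' (by simp) (hK₂.1.subset_ground hw)
    exact isLongLine_closure_pair hs hyE (hK₁.1.subset_ground ha)
      (ne_of_mem_of_not_mem ha hy₁).symm hwf (ne_of_mem_of_not_mem hw hy₂) hwa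
  · left
    obtain ⟨_, ⟨a, ha, rfl⟩, hfa⟩ := not_subset.1 h
    have ha₂ : a ∉ K₂ := fun ha₂ ↦ hfa ⟨a, ha₂, rfl⟩
    refine hasU25Minor_of_injOn_closure_pair hs hr hyE
      (insert_subset (hK₁.1.subset_ground ha) hK₂.1.subset_ground) ?_ ?_
      ((injOn_insert ha₂).2 ⟨hf₂, hfa⟩)
    · rintro (rfl | h)
      exacts [hy₁ ha, hy₂ h]
    · rw [encard_insert_of_notMem ha₂, h₂]
      rfl

end Matroid

open Matroid

theorem statement13_general (M : Matroid α) (hs : M.IsSimpleMatroid)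
    (hrk : ∃ B, M.IsBase B ∧ B.encard = 3)
    (hE : M.E.encard = 9)
    (x : α)
    (L₁ L₂ L₃ : Set α)
    (hL₁ : M.IsLongLine L₁) (hL₂ : M.IsLongLine L₂) (hL₃ : M.IsLongLine L₃)
    (hne₁₂ : L₁ ≠ L₂) (hne₁₃ : L₁ ≠ L₃) (hne₂₃ : L₂ ≠ L₃)
    (hx₁ : x ∈ L₁) (hx₂ : x ∈ L₂) (hx₃ : x ∈ L₃)
    (hcover : M.E = L₁ ∪ L₂ ∪ L₃) :
    M.HasU25Minor ∨
      ∃ K₁ K₂ K₃ : Set α, ({K₁, K₂, K₃} : Set (Set α)) = {L₁, L₂, L₃} ∧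
        K₁.encard = 4 ∧ K₂.encard = 4 ∧ K₃.encard = 3 ∧
        ∀ y ∈ K₃ \ {x}, 4 ≤ {L : Set α | M.IsLongLine L ∧ y ∈ L}.encard := by
  by_cases hU : M.HasU25Minor
  · exact .inl hU
  right
  have hr : M.eRank ≤ 3 := by
    obtain ⟨B, hB, hB3⟩ := hrk
    rw [← hB.encard_eq_eRank, hB3]
  have hle : ∀ L, M.IsLine L → L.encard ≤ 4 := fun L hL ↦
    not_lt.1 fun h ↦ hU (hL.hasU25Minor_of_five_le_encard hs (Order.add_one_le_of_lt h))
  have h₁₂ := hL₁.1.inter_eq_singleton hs hL₂.1 hne₁₂ hx₁ hx₂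
  have h₁₃ := hL₁.1.inter_eq_singleton hs hL₃.1 hne₁₃ hx₁ hx₃
  have h₂₃ := hL₂.1.inter_eq_singleton hs hL₃.1 hne₂₃ hx₂ hx₃
  have hsum : L₁.encard + L₂.encard + L₃.encard = 11 := by
    rw [← encard_union_union_add_two h₁₂ h₁₃ h₂₃, ← hcover, hE]
    rfl
  have hR {K₁ K₂ K₃ : Set α} (hK₁ : M.IsLongLine K₁) (hK₂ : M.IsLongLine K₂)
      (hK₃ : M.IsLongLine K₃) (h₁₂ : K₁ ∩ K₂ = {x}) (h₁₃ : K₁ ∩ K₃ = {x}) (h₂₃ : K₂ ∩ K₃ = {x})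
      (h₁ : K₁.encard = 4) (h₂ : K₂.encard = 4) :
      ∀ y ∈ K₃ \ {x}, 4 ≤ {L : Set α | M.IsLongLine L ∧ y ∈ L}.encard := fun y hy ↦
    (hasU25Minor_or_four_le_encard_longLines hs hr hK₁.1 hK₂.1 hK₃ h₁₂ h₁₃ h₂₃ h₁ h₂
      hy).resolve_left hU
  obtain ⟨e₁, e₂, e₃⟩ | ⟨e₁, e₂, e₃⟩ | ⟨e₁, e₂, e₃⟩ := ENat.eq_four_four_three_of_add_eq_eleven
    hL₁.2 hL₂.2 hL₃.2 (hle _ hL₁.1) (hle _ hL₂.1) (hle _ hL₃.1) hsum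
  · exact ⟨L₁, L₂, L₃, rfl, e₁, e₂, e₃, hR hL₁ hL₂ hL₃ h₁₂ h₁₃ h₂₃ e₁ e₂⟩
  · refine ⟨L₁, L₃, L₂, by rw [pair_comm], e₁, e₃, e₂, hR hL₁ hL₃ hL₂ h₁₃ h₁₂ ?_ e₁ e₃⟩
    rw [inter_comm, h₂₃]
  · refine ⟨L₂, L₃, L₁, by rw [pair_comm L₃ L₁, insert_comm L₂ L₁], e₂, e₃, e₁,
      hR hL₂ hL₃ hL₁ h₂₃ ?_ ?_ e₂ e₃⟩
    · rw [inter_comm, h₁₂]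
    · rw [inter_comm, h₁₃]

/-- A simple rank-`3` matroid on `9` elements consisting of three long lines through
a common point either has a `U_{2,5}`-minor or is the ternary Reid geometry `R₉`:
two of the lines have four points, the third has three points, and both elements of
the third line other than the common point lie on at least four long lines. -/
theorem statement13 (M : Matroid α) (hs : M.IsSimpleMatroid)
    (hrk : ∃ B, M.IsBase B ∧ B.encard = 3)
    (hE : M.E.encard = 9)
    (x : α) (hx : x ∈ M.E)
    (L₁ L₂ L₃ : Set α)
    (hL₁ : M.IsLongLine L₁) (hL₂ : M.IsLongLine L₂) (hL₃ : M.IsLongLine L₃)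
    (hne₁₂ : L₁ ≠ L₂) (hne₁₃ : L₁ ≠ L₃) (hne₂₃ : L₂ ≠ L₃)
    (hx₁ : x ∈ L₁) (hx₂ : x ∈ L₂) (hx₃ : x ∈ L₃)
    (hcover : M.E = L₁ ∪ L₂ ∪ L₃) :
    M.HasU25Minor ∨
      ∃ K₁ K₂ K₃ : Set α, ({K₁, K₂, K₃} : Set (Set α)) = {L₁, L₂, L₃} ∧
        K₁.encard = 4 ∧ K₂.encard = 4 ∧ K₃.encard = 3 ∧
        ∀ y ∈ K₃ \ {x}, 4 ≤ {L : Set α | M.IsLongLine L ∧ y ∈ L}.encard :=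
  statement13_general M hs hrk hE x L₁ L₂ L₃ hL₁ hL₂ hL₃ hne₁₂ hne₁₃ hne₂₃ hx₁ hx₂ hx₃ hcover
end
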